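/- arXiv:1503.02673 — 6 statements merged into one kernel-verified Lean document; each statement's English description precedes it below -/
import Mathlib

section
/- For the tensor product of two Bernstein operators $B_{n_1}, B_{n_2}$ on $C[0,1]$, for every $F \in C([0,1]^2)$ and $(x,y) \in [0,1]^2$: $|F(x,y) - ({}_xB_{n_1} \circ {}_yB_{n_2})(F;x,y)| \le \frac{3}{2}\left[\omega_2\left(F; \sqrt{\tfrac{x(1-x)}{n_1}}, 0\right) + \omega_2\left(F; 0, \sqrt{\tfrac{y(1-y)}{n_2}}\right)\right]$. -/
open Finset Set

/-- Tensor product of two classical Bernstein operators on `[0,1]`. -/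
noncomputable def bernsteinTensor (n₁ n₂ : ℕ) (F : ℝ → ℝ → ℝ) (x y : ℝ) : ℝ :=
  ∑ i ∈ Finset.range (n₁ + 1), ∑ j ∈ Finset.range (n₂ + 1),
    F ((i : ℝ) / n₁) ((j : ℝ) / n₂) *
      ((n₁.choose i : ℝ) * x ^ i * (1 - x) ^ (n₁ - i)) *
      ((n₂.choose j : ℝ) * y ^ j * (1 - y) ^ (n₂ - j))

/-- Partial second modulus of smoothness in the first variable, on `[0,1]²`. -/
noncomputable def omega2Fst (F : ℝ → ℝ → ℝ) (δ : ℝ) : ℝ :=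
  sSup {v | ∃ x y h : ℝ, x ∈ Set.Icc (0:ℝ) 1 ∧ x + 2 * h ∈ Set.Icc (0:ℝ) 1 ∧
    y ∈ Set.Icc (0:ℝ) 1 ∧ |h| ≤ δ ∧
    v = |F (x + 2 * h) y - 2 * F (x + h) y + F x y|}

/-- Partial second modulus of smoothness in the second variable, on `[0,1]²`. -/
noncomputable def omega2Snd (F : ℝ → ℝ → ℝ) (δ : ℝ) : ℝ :=
  sSup {v | ∃ x y h : ℝ, x ∈ Set.Icc (0:ℝ) 1 ∧ y ∈ Set.Icc (0:ℝ) 1 ∧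
    y + 2 * h ∈ Set.Icc (0:ℝ) 1 ∧ |h| ≤ δ ∧
    v = |F x (y + 2 * h) - 2 * F x (y + h) + F x y|}

/-!
Păltănea's univariate estimate comes from a quadratic majorant. If `f` is bounded below and its
second differences with step at most `h` are at most `ω`, a discrete maximum principle, applied to
the chord of `f` over `[u, v]` minus `f` minus the parabola `ω + K (t - u) (v - t)` with
`2 K h² > ω`, shows that `f` lies above each chord up to that parabola. Hence at an interior point
`x` there is a slope `d` with `f t ≤ f x + ω + d (t - x) + K (t - x)²` on `[0, 1]`. The positive
operator `B_n` reproduces affine functions and has second central moment `x (1 - x) / n`, so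
`B_n f x - f x ≤ ω + K x (1 - x) / n`, which tends to `3 ω / 2` as `K h² ↓ ω / 2` when
`h² = x (1 - x) / n`. For the tensor product, `F - B⊗B F = (F - B_x F) + B_x (F - B_y F)` and
`B_x` is a positive operator reproducing constants.
-/

open Polynomial Bornology

theorem nonpos_of_forall_le_half_or_le_avg_sub {α : Type*} {G : α → ℝ} {s : Set α} {κ : ℝ}
    (hG : BddAbove (G '' s)) (hκ : 0 < κ)
    (h : ∀ t ∈ s, (∃ t' ∈ s, G t ≤ G t' / 2) ∨ ∃ t₁ ∈ s, ∃ t₂ ∈ s, G t ≤ (G t₁ + G t₂) / 2 - κ)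
    {t : α} (ht : t ∈ s) : G t ≤ 0 := by
  set S := sSup (G '' s)
  have hle : ∀ t ∈ s, G t ≤ S := fun t ht => le_csSup hG (mem_image_of_mem G ht)
  have hS : S ≤ max (S / 2) (S - κ) := by
    refine csSup_le ((nonempty_of_mem ht).image G) ?_
    rintro _ ⟨t, ht, rfl⟩
    rcases h t ht with ⟨t', ht', h'⟩ | ⟨t₁, ht₁, t₂, ht₂, h'⟩
    · exact le_max_of_le_left (by linarith [hle t' ht'])
    · exact le_max_of_le_right (by linarith [hle t₁ ht₁, hle t₂ ht₂])
  have := hle t ht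
  rcases le_max_iff.mp hS with h | h <;> linarith

theorem nonpos_on_Icc_of_midpoint_le {G : ℝ → ℝ} {u v h c L : ℝ} (hbdd : BddAbove (G '' Icc u v))
    (hh : 0 ≤ h) (hL : 0 ≤ L) (hc : c < 2 * L * h ^ 2) (hu : G u = -c) (hv : G v = -c)
    (hmid : ∀ a b, a ≤ b → b - a ≤ h → a ∈ Icc u v → 2 * b - a ∈ Icc u v →
      G b ≤ (G a + G (2 * b - a)) / 2 + (c / 2 - L * (b - a) ^ 2))
    {x : ℝ} (hx : x ∈ Icc u v) : G x ≤ 0 := by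
  refine nonpos_of_forall_le_half_or_le_avg_sub hbdd (κ := L * h ^ 2 - c / 2) (by linarith)
    (fun t ⟨htu, htv⟩ => ?_) hx
  by_cases hnu : t - u ≤ h ∧ 2 * t - u ≤ v
  · refine Or.inl ⟨2 * t - u, ⟨by linarith, hnu.2⟩, ?_⟩
    have := hmid u t htu hnu.1 ⟨le_rfl, htu.trans htv⟩ ⟨by linarith, hnu.2⟩
    nlinarith
  by_cases hnv : v - t ≤ h ∧ u ≤ 2 * t - v
  · refine Or.inl ⟨2 * t - v, ⟨hnv.2, by linarith⟩, ?_⟩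
    have := hmid (2 * t - v) t (by linarith) (by linarith) ⟨hnv.2, by linarith⟩
      (by rw [sub_sub_cancel]; exact ⟨htu.trans htv, le_rfl⟩)
    rw [sub_sub_cancel] at this
    nlinarith
  have hut : h ≤ t - u ∧ h ≤ v - t := by
    rcases le_total t ((u + v) / 2) with hm | hm
    · have : h < t - u := by by_contra!; exact hnu ⟨this, by linarith⟩
      constructor <;> linarith
    · have : h < v - t := by by_contra!; exact hnv ⟨this, by linarith⟩
      constructor <;> linarith
  refine Or.inr ⟨t - h, ⟨by linarith, by linarith⟩, 2 * t - (t - h), ⟨by linarith, by linarith⟩, ?_⟩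
  have := hmid (t - h) t (by linarith) (by linarith) ⟨by linarith, by linarith⟩
    ⟨by linarith, by linarith⟩
  rw [sub_sub_cancel] at this
  linarith

theorem exists_le_mul_sub_of_chord_nonpos {g : ℝ → ℝ} {a b x : ℝ} (hx : x ∈ Ioo a b)
    (hgx : g x ≤ 0) (hg : ∀ u ∈ Ico a x, ∀ v ∈ Ioc x b, (v - x) * g u + (x - u) * g v ≤ 0) :
    ∃ d, ∀ t ∈ Icc a b, g t ≤ d * (t - x) := by
  have hslope : ∀ u ∈ Ico a x, ∀ v ∈ Ioc x b, g v / (v - x) ≤ g u / (u - x) := by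
    intro u hu v hv
    rw [div_le_iff₀ (by linarith [hv.1]), div_mul_eq_mul_div,
      le_div_iff_of_neg (by linarith [hu.2])]
    linarith [hg u hu v hv]
  have hbdd : BddAbove ((fun v => g v / (v - x)) '' Ioc x b) :=
    ⟨g a / (a - x), forall_mem_image.2 (hslope a ⟨le_rfl, hx.1⟩)⟩
  refine ⟨sSup ((fun v => g v / (v - x)) '' Ioc x b), fun t ht => ?_⟩
  rcases lt_trichotomy t x with htx | rfl | htx
  · have hd : sSup ((fun v => g v / (v - x)) '' Ioc x b) ≤ g t / (t - x) :=
      csSup_le ((Set.nonempty_Ioc.2 hx.2).image _) (forall_mem_image.2 (hslope t ⟨ht.1, htx⟩))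
    rwa [le_div_iff_of_neg (by linarith)] at hd
  · simpa using hgx
  · have hd : g t / (t - x) ≤ sSup ((fun v => g v / (v - x)) '' Ioc x b) :=
      le_csSup hbdd (mem_image_of_mem _ ⟨htx, ht.2⟩)
    rwa [div_le_iff₀ (by linarith)] at hd

def SecondDiffLE (f : ℝ → ℝ) (h ω : ℝ) : Prop :=
  ∀ a s, 0 ≤ s → s ≤ h → a ∈ Icc (0:ℝ) 1 → a + 2 * s ∈ Icc (0:ℝ) 1 →
    f (a + 2 * s) - 2 * f (a + s) + f a ≤ ω

namespace SecondDiffLE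

variable {f : ℝ → ℝ} {h ω K : ℝ}

theorem nonneg (hω : SecondDiffLE f h ω) (hh : 0 ≤ h) : 0 ≤ ω := by
  have h0 := hω 0 0 le_rfl hh (by norm_num) (by norm_num)
  simp only [mul_zero, add_zero] at h0
  linarith

theorem chord_le (hω : SecondDiffLE f h ω) (hf : BddBelow (f '' Icc 0 1)) (hh : 0 < h)
    (hK : ω < 2 * K * h ^ 2) {u v : ℝ} (hu : 0 ≤ u) (huv : u < v) (hv : v ≤ 1) {x : ℝ}
    (hx : x ∈ Icc u v) :
    (v - x) * f u + (x - u) * f v ≤ (v - u) * (f x + ω + K * ((x - u) * (v - x))) := by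
  -- `G / (v - u)` is the chord of `f` on `[u, v]`, minus `f`, minus `ω + K (t - u) (v - t)`
  set G : ℝ → ℝ := fun t =>
    (v - t) * f u + (t - u) * f v - (v - u) * (f t + ω + K * ((t - u) * (v - t)))
  have hvu : 0 < v - u := sub_pos.2 huv
  have hK0 : 0 ≤ K := by nlinarith [hω.nonneg hh.le]
  have hsub : Icc u v ⊆ Icc 0 1 := Icc_subset_Icc hu hv
  have hbdd : BddAbove (G '' Icc u v) := by
    obtain ⟨m, hm⟩ := hf
    obtain ⟨M, hM⟩ := isCompact_Icc.bddAbove_image (f := fun t => (v - t) * f u + (t - u) * f v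
      - (v - u) * (ω + K * ((t - u) * (v - t)))) (by fun_prop)
    refine ⟨M - (v - u) * m, forall_mem_image.2 fun t ht => ?_⟩
    have h1 := hM (mem_image_of_mem _ ht)
    have h2 := hm (mem_image_of_mem f (hsub ht))
    simp only [G] at h1 ⊢
    nlinarith
  have hmid : ∀ a b, a ≤ b → b - a ≤ h → a ∈ Icc u v → 2 * b - a ∈ Icc u v →
      G b ≤ (G a + G (2 * b - a)) / 2 + ((v - u) * ω / 2 - (v - u) * K * (b - a) ^ 2) := by
    intro a b hab hbh ha hc
    have hΔ := hω a (b - a) (by linarith) hbh (hsub ha) (by convert hsub hc using 1; ring)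
    rw [show a + 2 * (b - a) = 2 * b - a by ring, show a + (b - a) = b by ring] at hΔ
    have key : G b - (G a + G (2 * b - a)) / 2 =
        (v - u) * ((f (2 * b - a) - 2 * f b + f a) / 2 - K * (b - a) ^ 2) := by
      simp only [G]; ring
    nlinarith
  have hGx : G x ≤ 0 := nonpos_on_Icc_of_midpoint_le hbdd hh.le (mul_nonneg hvu.le hK0)
    (by nlinarith) (by simp only [G]; ring) (by simp only [G]; ring) hmid hx
  simpa [G] using hGx

theorem exists_le_parabola (hω : SecondDiffLE f h ω) (hf : BddBelow (f '' Icc 0 1)) (hh : 0 < h)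
    (hK : ω < 2 * K * h ^ 2) {x : ℝ} (hx : x ∈ Ioo (0:ℝ) 1) :
    ∃ d, ∀ t ∈ Icc (0:ℝ) 1, f t ≤ (f x + ω) + d * (t - x) + K * (t - x) ^ 2 := by
  obtain ⟨d, hd⟩ := exists_le_mul_sub_of_chord_nonpos
    (g := fun t => f t - (f x + ω) - K * (t - x) ^ 2)
    hx (by simpa using hω.nonneg hh.le) fun u hu v hv => by
      have := hω.chord_le hf hh hK hu.1 (hu.2.trans hv.1) hv.2 ⟨hu.2.le, hv.1.le⟩
      linear_combination this
  exact ⟨d, fun t ht => by linarith [hd t ht]⟩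

end SecondDiffLE

noncomputable def bernsteinOp (n : ℕ) (f : ℝ → ℝ) (x : ℝ) : ℝ :=
  ∑ i ∈ range (n + 1), f (i / n) * (bernsteinPolynomial ℝ n i).eval x

theorem bernsteinPolynomial_eval_nonneg (n i : ℕ) {x : ℝ} (hx : x ∈ Icc (0:ℝ) 1) :
    0 ≤ (bernsteinPolynomial ℝ n i).eval x := by
  have hx₀ := hx.1
  have hx₁ := sub_nonneg.2 hx.2
  simp only [bernsteinPolynomial, eval_mul, eval_natCast, eval_pow, eval_X, eval_sub, eval_one]
  positivity

theorem sum_bernsteinPolynomial_eval (n : ℕ) (x : ℝ) :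
    ∑ i ∈ range (n + 1), (bernsteinPolynomial ℝ n i).eval x = 1 := by
  simpa [eval_finsetSum] using congrArg (eval x) (bernsteinPolynomial.sum ℝ n)

theorem sum_sub_mul_bernsteinPolynomial_eval {n : ℕ} (hn : 0 < n) (x : ℝ) :
    ∑ i ∈ range (n + 1), (i / n - x) * (bernsteinPolynomial ℝ n i).eval x = 0 := by
  have hmean : ∑ i ∈ range (n + 1), (i : ℝ) * (bernsteinPolynomial ℝ n i).eval x = n * x := by
    simpa [eval_finsetSum] using congrArg (eval x) (bernsteinPolynomial.sum_smul ℝ n)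
  have hn' : (n : ℝ) ≠ 0 := by positivity
  simp only [sub_mul, sum_sub_distrib, div_mul_eq_mul_div, ← sum_div, hmean, ← mul_sum,
    sum_bernsteinPolynomial_eval]
  field_simp
  ring

theorem sum_sub_sq_mul_bernsteinPolynomial_eval {n : ℕ} (hn : 0 < n) (x : ℝ) :
    ∑ i ∈ range (n + 1), (i / n - x) ^ 2 * (bernsteinPolynomial ℝ n i).eval x =
      x * (1 - x) / n := by
  have hvar : ∑ i ∈ range (n + 1), (n * x - i) ^ 2 * (bernsteinPolynomial ℝ n i).eval x =
      n * x * (1 - x) := by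
    simpa [eval_finsetSum] using congrArg (eval x) (bernsteinPolynomial.variance ℝ n)
  have hn' : (n : ℝ) ≠ 0 := by positivity
  have hterm : ∀ i : ℕ, ((i : ℝ) / n - x) ^ 2 = (n * x - i) ^ 2 / n ^ 2 := fun i => by
    field_simp; ring
  simp only [hterm, div_mul_eq_mul_div, ← sum_div, hvar]
  field_simp

theorem bernsteinOp_quadratic {n : ℕ} (hn : 0 < n) (a b c x : ℝ) :
    bernsteinOp n (fun t => a + b * (t - x) + c * (t - x) ^ 2) x = a + c * (x * (1 - x) / n) := by
  simp only [bernsteinOp, add_mul, sum_add_distrib, mul_assoc, ← mul_sum,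
    sum_bernsteinPolynomial_eval, sum_sub_mul_bernsteinPolynomial_eval hn,
    sum_sub_sq_mul_bernsteinPolynomial_eval hn]
  ring

theorem bernsteinOp_mono {n : ℕ} {f g : ℝ → ℝ} {x : ℝ} (hx : x ∈ Icc (0:ℝ) 1)
    (hfg : ∀ t ∈ Icc (0:ℝ) 1, f t ≤ g t) : bernsteinOp n f x ≤ bernsteinOp n g x := by
  refine sum_le_sum fun i hi => mul_le_mul_of_nonneg_right (hfg _ ⟨by positivity, ?_⟩)
    (bernsteinPolynomial_eval_nonneg n i hx)
  exact div_le_one_of_le₀ (by exact_mod_cast Nat.lt_succ_iff.mp (mem_range.mp hi)) n.cast_nonneg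

theorem bernsteinOp_const (n : ℕ) (c x : ℝ) : bernsteinOp n (fun _ => c) x = c := by
  simp [bernsteinOp, ← mul_sum, sum_bernsteinPolynomial_eval]

theorem bernsteinOp_sub (n : ℕ) (f g : ℝ → ℝ) (x : ℝ) :
    bernsteinOp n (fun t => f t - g t) x = bernsteinOp n f x - bernsteinOp n g x := by
  simp [bernsteinOp, sub_mul]

theorem bernsteinOp_neg (n : ℕ) (f : ℝ → ℝ) (x : ℝ) :
    bernsteinOp n (-f) x = -bernsteinOp n f x := by
  simp [bernsteinOp]

theorem abs_bernsteinOp_le {n : ℕ} {f : ℝ → ℝ} {x M : ℝ} (hx : x ∈ Icc (0:ℝ) 1)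
    (hf : ∀ t ∈ Icc (0:ℝ) 1, |f t| ≤ M) : |bernsteinOp n f x| ≤ M := by
  have hlo := bernsteinOp_mono (n := n) hx fun t ht => (abs_le.mp (hf t ht)).1
  have hhi := bernsteinOp_mono (n := n) hx fun t ht => (abs_le.mp (hf t ht)).2
  rw [bernsteinOp_const] at hlo hhi
  exact abs_le.mpr ⟨hlo, hhi⟩

theorem bernsteinOp_zero (n : ℕ) (f : ℝ → ℝ) : bernsteinOp n f 0 = f 0 := by
  simp [bernsteinOp, bernsteinPolynomial.eval_at_0]

theorem bernsteinOp_one {n : ℕ} (hn : 0 < n) (f : ℝ → ℝ) : bernsteinOp n f 1 = f 1 := by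
  simp [bernsteinOp, bernsteinPolynomial.eval_at_1, hn.ne']

theorem SecondDiffLE.bernsteinOp_sub_le {f : ℝ → ℝ} {h ω K : ℝ} (hω : SecondDiffLE f h ω)
    (hf : BddBelow (f '' Icc 0 1)) (hh : 0 < h) (hK : ω < 2 * K * h ^ 2) {n : ℕ} (hn : 0 < n)
    {x : ℝ} (hx : x ∈ Ioo (0:ℝ) 1) :
    bernsteinOp n f x - f x ≤ ω + K * (x * (1 - x) / n) := by
  obtain ⟨d, hd⟩ := hω.exists_le_parabola hf hh hK hx
  have := bernsteinOp_mono (n := n) (Ioo_subset_Icc_self hx) hd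
  rw [bernsteinOp_quadratic hn] at this
  linarith

theorem abs_bernsteinOp_sub_le {f : ℝ → ℝ} (hf : IsBounded (f '' Icc 0 1)) {n : ℕ} (hn : 0 < n)
    {x ω : ℝ} (hx : x ∈ Icc (0:ℝ) 1)
    (hω : ∀ a s, 0 ≤ s → s ≤ √(x * (1 - x) / n) → a ∈ Icc (0:ℝ) 1 → a + 2 * s ∈ Icc (0:ℝ) 1 →
      |f (a + 2 * s) - 2 * f (a + s) + f a| ≤ ω) :
    |bernsteinOp n f x - f x| ≤ 3 / 2 * ω := by
  set δ := √(x * (1 - x) / n)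
  have hup : SecondDiffLE f δ ω := fun a s h₁ h₂ h₃ h₄ => (abs_le.mp (hω a s h₁ h₂ h₃ h₄)).2
  have hdown : SecondDiffLE (-f) δ ω := fun a s h₁ h₂ h₃ h₄ => by
    simp only [Pi.neg_apply]
    linarith [(abs_le.mp (hω a s h₁ h₂ h₃ h₄)).1]
  have hω0 := hup.nonneg (Real.sqrt_nonneg _)
  rcases hx.1.eq_or_lt with rfl | hx0
  · simpa [bernsteinOp_zero] using hω0
  rcases hx.2.eq_or_lt with rfl | hx1
  · simpa [bernsteinOp_one hn] using hω0
  have hV : 0 < x * (1 - x) / n := by have := sub_pos.2 hx1; positivity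
  have hδ : 0 < δ := Real.sqrt_pos.2 hV
  have hδ2 : δ ^ 2 = x * (1 - x) / n := Real.sq_sqrt hV.le
  have hbelow : BddBelow ((-f) '' Icc 0 1) := by
    obtain ⟨M, hM⟩ := hf.bddAbove
    exact ⟨-M, forall_mem_image.2 fun t ht => neg_le_neg (hM (mem_image_of_mem f ht))⟩
  -- `K = (c - ω) / δ²` turns the bound `ω + K δ²` into `c`, and is admissible iff `c > 3 ω / 2`
  refine le_of_forall_gt_imp_ge_of_dense fun c hc => ?_
  have hK : ω < 2 * ((c - ω) / δ ^ 2) * δ ^ 2 := by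
    rw [mul_assoc, div_mul_cancel₀ _ (by positivity)]; linarith
  have hc' : ω + (c - ω) / δ ^ 2 * (x * (1 - x) / n) = c := by
    rw [← hδ2, div_mul_cancel₀ _ (by positivity)]; ring
  refine abs_sub_le_iff.mpr ⟨?_, ?_⟩
  · linarith [hup.bernsteinOp_sub_le hf.bddBelow hδ hK hn ⟨hx0, hx1⟩]
  · have := hdown.bernsteinOp_sub_le hbelow hδ hK hn ⟨hx0, hx1⟩
    rw [bernsteinOp_neg, Pi.neg_apply] at this
    linarith

theorem bernsteinTensor_eq_bernsteinOp (n₁ n₂ : ℕ) (F : ℝ → ℝ → ℝ) (x y : ℝ) :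
    bernsteinTensor n₁ n₂ F x y = bernsteinOp n₁ (fun s => bernsteinOp n₂ (F s) y) x := by
  simp only [bernsteinTensor, bernsteinOp, sum_mul, bernsteinPolynomial, eval_mul, eval_natCast,
    eval_pow, eval_X, eval_sub, eval_one]
  exact sum_congr rfl fun i _ => sum_congr rfl fun j _ => by ring

theorem abs_le_omega2Fst {F : ℝ → ℝ → ℝ} {C : ℝ}
    (hC : ∀ a ∈ Icc (0:ℝ) 1, ∀ b ∈ Icc (0:ℝ) 1, |F a b| ≤ C) {δ y a s : ℝ}
    (hy : y ∈ Icc (0:ℝ) 1) (hs : 0 ≤ s) (hsδ : s ≤ δ) (ha : a ∈ Icc (0:ℝ) 1)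
    (ha₂ : a + 2 * s ∈ Icc (0:ℝ) 1) :
    |F (a + 2 * s) y - 2 * F (a + s) y + F a y| ≤ omega2Fst F δ := by
  refine le_csSup ⟨4 * C, ?_⟩ ⟨a, y, s, ha, ha₂, hy, by rwa [abs_of_nonneg hs], rfl⟩
  rintro _ ⟨a, b, s, ha, ha₂, hb, -, rfl⟩
  have h₀ := abs_le.mp (hC a ha b hb)
  have h₁ := abs_le.mp (hC (a + s) ⟨by linarith [ha.1, ha₂.1], by linarith [ha.2, ha₂.2]⟩ b hb)
  have h₂ := abs_le.mp (hC (a + 2 * s) ha₂ b hb)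
  exact abs_le.mpr ⟨by linarith, by linarith⟩

theorem omega2Snd_eq_omega2Fst_swap (F : ℝ → ℝ → ℝ) (δ : ℝ) :
    omega2Snd F δ = omega2Fst (fun a b => F b a) δ := by
  unfold omega2Snd omega2Fst
  congr 1
  ext w
  constructor
  · rintro ⟨a, b, s, ha, hb, hb₂, hs, rfl⟩
    exact ⟨b, a, s, hb, hb₂, ha, hs, rfl⟩
  · rintro ⟨b, a, s, hb, hb₂, ha, hs, rfl⟩
    exact ⟨a, b, s, ha, hb, hb₂, hs, rfl⟩

theorem abs_le_omega2Snd {F : ℝ → ℝ → ℝ} {C : ℝ}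
    (hC : ∀ a ∈ Icc (0:ℝ) 1, ∀ b ∈ Icc (0:ℝ) 1, |F a b| ≤ C) {δ x b s : ℝ}
    (hx : x ∈ Icc (0:ℝ) 1) (hs : 0 ≤ s) (hsδ : s ≤ δ) (hb : b ∈ Icc (0:ℝ) 1)
    (hb₂ : b + 2 * s ∈ Icc (0:ℝ) 1) :
    |F x (b + 2 * s) - 2 * F x (b + s) + F x b| ≤ omega2Snd F δ := by
  rw [omega2Snd_eq_omega2Fst_swap]
  exact abs_le_omega2Fst (F := fun a b => F b a) (fun a ha b hb => hC b hb a ha) hx hs hsδ hb hb₂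

/-- second-modulus estimate for the tensor product of Bernstein operators. -/
theorem stmt2 (n₁ n₂ : ℕ) (hn₁ : 0 < n₁) (hn₂ : 0 < n₂) (F : ℝ → ℝ → ℝ)
    (hF : ContinuousOn (fun p : ℝ × ℝ => F p.1 p.2)
      (Set.Icc (0:ℝ) 1 ×ˢ Set.Icc (0:ℝ) 1))
    (x y : ℝ) (hx : x ∈ Set.Icc (0:ℝ) 1) (hy : y ∈ Set.Icc (0:ℝ) 1) :
    |F x y - bernsteinTensor n₁ n₂ F x y| ≤
      (3 / 2) * (omega2Fst F (Real.sqrt (x * (1 - x) / n₁)) +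
        omega2Snd F (Real.sqrt (y * (1 - y) / n₂))) := by
  obtain ⟨C, hC⟩ := (isCompact_Icc.prod isCompact_Icc).exists_bound_of_continuousOn hF
  have hC' : ∀ a ∈ Icc (0:ℝ) 1, ∀ b ∈ Icc (0:ℝ) 1, |F a b| ≤ C :=
    fun a ha b hb => hC (a, b) ⟨ha, hb⟩
  have hbdd : ∀ {g : ℝ → ℝ}, (∀ t ∈ Icc (0:ℝ) 1, |g t| ≤ C) → IsBounded (g '' Icc 0 1) :=
    fun hg => isBounded_iff_forall_norm_le.2 ⟨C, forall_mem_image.2 hg⟩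
  have h₁ : |bernsteinOp n₁ (F · y) x - F x y| ≤ 3 / 2 * omega2Fst F √(x * (1 - x) / n₁) :=
    abs_bernsteinOp_sub_le (hbdd fun t ht => hC' t ht y hy) hn₁ hx
      fun _ _ hs hsδ ha ha₂ => abs_le_omega2Fst hC' hy hs hsδ ha ha₂
  have h₂ : ∀ t ∈ Icc (0:ℝ) 1,
      |bernsteinOp n₂ (F t) y - F t y| ≤ 3 / 2 * omega2Snd F √(y * (1 - y) / n₂) :=
    fun t ht => abs_bernsteinOp_sub_le (hbdd (hC' t ht)) hn₂ hy
      fun _ _ hs hsδ hb hb₂ => abs_le_omega2Snd hC' ht hs hsδ hb hb₂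
  calc |F x y - bernsteinTensor n₁ n₂ F x y|
      = |bernsteinOp n₁ (F · y) x - F x y
          + bernsteinOp n₁ (fun t => bernsteinOp n₂ (F t) y - F t y) x| := by
        rw [bernsteinTensor_eq_bernsteinOp, bernsteinOp_sub, ← abs_neg]
        congr 1
        ring
    _ ≤ 3 / 2 * omega2Fst F √(x * (1 - x) / n₁) + 3 / 2 * omega2Snd F √(y * (1 - y) / n₂) :=
        (abs_add_le _ _).trans (add_le_add h₁ (abs_bernsteinOp_le hx h₂))
    _ = _ := by ring
end

section
/- For the composite cubature functional $\overline{\mathcal{I}}$ and $f \in C^{2,2}([0,1]^2)$: $\left|\int_0^1\int_0^1 f(x,y)\,dx\,dy - \overline{\mathcal{I}}(f)\right| \le \frac{1}{12 n_1 m_1^2}\|f^{(2,0)}\|_\infty + \frac{1}{12 n_2 m_2^2}\|f^{(0,2)}\|_\infty + \frac{1}{144 n_1 n_2 m_1^2 m_2^2}\|f^{(2,2)}\|_\infty$. -/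
/-!
On a cell `[a, b]`, the Bernstein rule is the exact integral of the degree-`n` Bernstein
polynomial `Bₙ g` of `g`, because every basis polynomial has integral `1 / (n + 1)`. The Bernstein
operator reproduces affine functions and has variance `x (1 - x) / n`, so a second-order Taylor
expansion gives `|Bₙ g - g| ≤ M x (1 - x) / (2 n)` on `[0, 1]`, whose integral is `M / (12 n)`;
rescaling to cells of width `1 / m` and summing over the `m` cells gives `M / (12 n m²)`.

The cubature is the composite rule `Q₁` in `x` applied to the composite rule `Q₂` in `y`, and
`I₁ I₂ f - Q₁ Q₂ f = I₁ (I₂ - Q₂) f + (I₁ - Q₁) (Q₂ f)`. The first term is controlled by the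
one-dimensional estimate in `y` for each fixed `x`, the second by the one in `x` applied to `Q₂ f`,
whose second `x`-derivative `Q₂ f_xx` is bounded by `sup |f_xx|`.
-/

open Finset Set intervalIntegral

/-- The composite Bernstein cubature functional on `[0,1]²`. -/
noncomputable def Ibar (n₁ n₂ m₁ m₂ : ℕ) (f : ℝ → ℝ → ℝ) : ℝ :=
  (1 / ((m₁ : ℝ) * m₂ * (n₁ + 1) * (n₂ + 1))) *
    ∑ k ∈ Finset.Icc 1 m₁, ∑ l ∈ Finset.Icc 1 m₂,
      ∑ i ∈ Finset.range (n₁ + 1), ∑ j ∈ Finset.range (n₂ + 1),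
        f (((k : ℝ) - 1) / m₁ + (i : ℝ) / (m₁ * n₁))
          (((l : ℝ) - 1) / m₂ + (j : ℝ) / (m₂ * n₂))

open MeasureTheory Polynomial

namespace bernsteinPolynomial

theorem eval_nonneg (n ν : ℕ) {x : ℝ} (hx : x ∈ Icc (0 : ℝ) 1) :
    0 ≤ (bernsteinPolynomial ℝ n ν).eval x := by
  have : 0 ≤ 1 - x := sub_nonneg.2 hx.2
  simp only [bernsteinPolynomial, eval_mul, eval_natCast, eval_pow, eval_X, eval_sub, eval_one]
  exact mul_nonneg (mul_nonneg (Nat.cast_nonneg _) (pow_nonneg hx.1 _)) (pow_nonneg this _)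

/-- `bernsteinPolynomial ℝ (n + 1) (ν + 1)` vanishes at `0` and `1` and has derivative
`(n + 1) (bernsteinPolynomial ℝ n ν - bernsteinPolynomial ℝ n (ν + 1))`. -/
theorem integral_eval_eq_integral_eval_succ {n ν : ℕ} (hν : ν < n) :
    ∫ x in (0 : ℝ)..1, (bernsteinPolynomial ℝ n ν).eval x =
      ∫ x in (0 : ℝ)..1, (bernsteinPolynomial ℝ n (ν + 1)).eval x := by
  set p := bernsteinPolynomial ℝ (n + 1) (ν + 1)
  have hFTC : ∫ x in (0 : ℝ)..1, (derivative p).eval x = p.eval 1 - p.eval 0 :=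
    integral_eq_sub_of_hasDerivAt (fun x _ => p.hasDerivAt x)
      (p.derivative.continuous.intervalIntegrable _ _)
  have hp : p.eval 1 - p.eval 0 = 0 := by
    simp [p, eval_at_0, eval_at_1, hν.ne]
  rw [hp, derivative_succ_aux] at hFTC
  simp only [eval_mul, eval_sub, eval_add, eval_natCast, eval_one] at hFTC
  rw [intervalIntegral.integral_const_mul, intervalIntegral.integral_sub
    ((bernsteinPolynomial ℝ n ν).continuous.intervalIntegrable _ _)
    ((bernsteinPolynomial ℝ n (ν + 1)).continuous.intervalIntegrable _ _)] at hFTC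
  have : (n : ℝ) + 1 ≠ 0 := by positivity
  linarith [(mul_eq_zero.1 hFTC).resolve_left this]

theorem integral_eval {n ν : ℕ} (hν : ν ≤ n) :
    ∫ x in (0 : ℝ)..1, (bernsteinPolynomial ℝ n ν).eval x = 1 / (n + 1) := by
  have hconst : ∀ ν ≤ n, ∫ x in (0 : ℝ)..1, (bernsteinPolynomial ℝ n ν).eval x =
      ∫ x in (0 : ℝ)..1, (bernsteinPolynomial ℝ n 0).eval x := by
    intro ν hν
    induction ν with
    | zero => rfl
    | succ ν ih => rw [← integral_eval_eq_integral_eval_succ hν, ih (by omega)]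
  have htotal : ∑ ν ∈ range (n + 1), ∫ x in (0 : ℝ)..1, (bernsteinPolynomial ℝ n ν).eval x = 1 := by
    rw [← intervalIntegral.integral_finsetSum
      (fun ν _ => (bernsteinPolynomial ℝ n ν).continuous.intervalIntegrable _ _)]
    simp [← eval_finsetSum, bernsteinPolynomial.sum]
  rw [Finset.sum_congr rfl fun ν hν => hconst ν (by simpa [Nat.lt_succ_iff] using hν),
    sum_const, card_range, nsmul_eq_mul] at htotal
  rw [hconst ν hν, eq_div_iff (by positivity)]
  push_cast at htotal
  linarith

end bernsteinPolynomial

theorem abs_sub_sub_mul_sub_le {s : Set ℝ} (hs : Convex ℝ s) {g g' g'' : ℝ → ℝ} {M : ℝ}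
    (hg : ∀ x ∈ s, HasDerivWithinAt g (g' x) s x)
    (hg' : ∀ x ∈ s, HasDerivWithinAt g' (g'' x) s x) (hM : ∀ x ∈ s, |g'' x| ≤ M)
    {x c : ℝ} (hx : x ∈ s) (hc : c ∈ s) :
    |g c - g x - g' x * (c - x)| ≤ M / 2 * (c - x) ^ 2 := by
  wlog hxc : x ≤ c generalizing s g g' g'' x c
  · have hneg : ∀ {h h' : ℝ → ℝ}, (∀ x ∈ s, HasDerivWithinAt h (h' x) s x) →
        ∀ t ∈ -s, HasDerivWithinAt (fun t => h (-t)) (-h' (-t)) (-s) t := fun hh t ht =>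
      ((hh (-t) ht).comp t (hasDerivWithinAt_neg t (-s)) fun _ hu => hu).congr_deriv (mul_neg_one _)
    have := this hs.neg (hneg hg) (fun t ht => (hneg hg' t ht).neg.congr_deriv (neg_neg _))
      (fun t ht => hM (-t) ht) (neg_mem_neg.2 hx) (neg_mem_neg.2 hc) (by linarith)
    convert this using 2 <;> ring_nf
  have hseg : Icc x c ⊆ s := hs.ordConnected.out hx hc
  have hderiv : ∀ t ∈ Ico x c, HasDerivWithinAt (fun t => g t - g x - g' x * (t - x))
      (g' t - g' x) (Ici t) t := fun t ht => by
    have := ((hg t (hseg (Ico_subset_Icc_self ht))).mono hseg).mono_of_mem_nhdsWithin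
      (Icc_mem_nhdsGE_of_mem ht)
    exact ((this.sub_const (g x)).sub
      (((hasDerivWithinAt_id t _).sub_const x).const_mul (g' x))).congr_deriv (by ring)
  have hbound : ∀ t ∈ Ico x c, ‖g' t - g' x‖ ≤ M * (t - x) := fun t ht => by
    have := hs.norm_image_sub_le_of_norm_hasDerivWithin_le hg' hM hx (hseg (Ico_subset_Icc_self ht))
    simpa [abs_of_nonneg (sub_nonneg.2 ht.1)] using this
  have hcont : ContinuousOn (fun t => g t - g x - g' x * (t - x)) (Icc x c) :=
    (((show ContinuousOn g s from fun t ht => (hg t ht).continuousWithinAt).mono hseg).sub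
      continuousOn_const).sub (by fun_prop)
  have := image_norm_le_of_norm_deriv_right_le_deriv_boundary hcont hderiv
    (B := fun t => M / 2 * (t - x) ^ 2) (by simp)
    (fun t => (((hasDerivAt_id' t).sub_const x |>.pow 2).const_mul (M / 2)).congr_deriv
      (by ring)) hbound
    (right_mem_Icc.2 hxc)
  simpa using this

/-- `(b - a) ∫₀¹ Bₙ (g ∘ (a + (b - a) ·))`. For `n = 0` the single node is `a`, as `0 / 0 = 0`. -/
noncomputable def bernsteinQuadrature (n : ℕ) (a b : ℝ) (g : ℝ → ℝ) : ℝ :=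
  (b - a) / (n + 1) * ∑ i ∈ range (n + 1), g (a + (b - a) * (i / n))

theorem natCast_div_mem_Icc {n i : ℕ} (hi : i ∈ range (n + 1)) : (i / n : ℝ) ∈ Icc (0 : ℝ) 1 :=
  ⟨by positivity, div_le_one_of_le₀ (by exact_mod_cast Nat.lt_succ_iff.1 (mem_range.1 hi))
    (Nat.cast_nonneg n)⟩

theorem abs_sum_bernstein_mul_sub_le {n : ℕ} (hn : 0 < n) {g g' g'' : ℝ → ℝ} {M : ℝ}
    (hg : ∀ x ∈ Icc (0 : ℝ) 1, HasDerivWithinAt g (g' x) (Icc 0 1) x)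
    (hg' : ∀ x ∈ Icc (0 : ℝ) 1, HasDerivWithinAt g' (g'' x) (Icc 0 1) x)
    (hM : ∀ x ∈ Icc (0 : ℝ) 1, |g'' x| ≤ M) {x : ℝ} (hx : x ∈ Icc (0 : ℝ) 1) :
    |∑ i ∈ range (n + 1), (bernsteinPolynomial ℝ n i).eval x * g (i / n) - g x| ≤
      M * (x * (1 - x)) / (2 * n) := by
  set b := fun i : ℕ => (bernsteinPolynomial ℝ n i).eval x
  have hsum : ∑ i ∈ range (n + 1), b i = 1 := by
    simpa [b, eval_finsetSum] using congrArg (eval x) (bernsteinPolynomial.sum ℝ n)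
  have hmean : ∑ i ∈ range (n + 1), i * b i = n * x := by
    simpa [b, eval_finsetSum] using congrArg (eval x) (bernsteinPolynomial.sum_smul ℝ n)
  have hvar : ∑ i ∈ range (n + 1), (n * x - i) ^ 2 * b i = n * x * (1 - x) := by
    simpa [b, eval_finsetSum] using congrArg (eval x) (bernsteinPolynomial.variance ℝ n)
  have hn' : (n : ℝ) ≠ 0 := by positivity
  -- the Bernstein operator reproduces affine functions, so only the Taylor remainder is left
  have hremainder : ∑ i ∈ range (n + 1), b i * g (i / n) - g x =
      ∑ i ∈ range (n + 1), b i * (g (i / n) - g x - g' x * (i / n - x)) := by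
    have hlin : ∑ i ∈ range (n + 1), b i * (g' x * (i / n - x)) = 0 := by
      have : ∀ i : ℕ, b i * (g' x * (i / n - x)) = g' x / n * (i * b i) - g' x * x * b i :=
        fun i => by field_simp
      simp only [this, sum_sub_distrib, ← mul_sum, hmean, hsum]
      field_simp
      ring
    have : ∀ i : ℕ, b i * (g (i / n) - g x - g' x * (i / n - x)) =
        b i * g (i / n) - b i * g x - b i * (g' x * (i / n - x)) := fun i => by ring
    rw [sum_congr rfl fun i _ => this i, sum_sub_distrib, sum_sub_distrib, hlin, ← sum_mul, hsum]
    ring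
  calc |∑ i ∈ range (n + 1), b i * g (i / n) - g x|
      ≤ ∑ i ∈ range (n + 1), b i * (M / 2 * (i / n - x) ^ 2) := by
        rw [hremainder]
        refine (abs_sum_le_sum_abs _ _).trans (sum_le_sum fun i hi => ?_)
        rw [abs_mul, abs_of_nonneg (bernsteinPolynomial.eval_nonneg n i hx)]
        exact mul_le_mul_of_nonneg_left
          (abs_sub_sub_mul_sub_le (convex_Icc 0 1) hg hg' hM hx (natCast_div_mem_Icc hi))
          (bernsteinPolynomial.eval_nonneg n i hx)
    _ = M / (2 * n ^ 2) * ∑ i ∈ range (n + 1), (n * x - i) ^ 2 * b i := by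
        rw [mul_sum]
        refine sum_congr rfl fun i _ => ?_
        field_simp
        ring
    _ = M * (x * (1 - x)) / (2 * n) := by
        rw [hvar]
        field_simp

theorem integral_sum_bernstein_mul (n : ℕ) (g : ℝ → ℝ) :
    ∫ x in (0 : ℝ)..1, ∑ i ∈ range (n + 1), (bernsteinPolynomial ℝ n i).eval x * g (i / n) =
      bernsteinQuadrature n 0 1 g := by
  rw [intervalIntegral.integral_finsetSum
    (f := fun i x => (bernsteinPolynomial ℝ n i).eval x * g (i / n))
    fun i _ => ((bernsteinPolynomial ℝ n i).continuous.mul continuous_const).intervalIntegrable _ _]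
  simp only [bernsteinQuadrature, intervalIntegral.integral_mul_const, mul_sum]
  refine sum_congr rfl fun i hi => ?_
  rw [bernsteinPolynomial.integral_eval (Nat.lt_succ_iff.1 (mem_range.1 hi))]
  simp

theorem integral_mul_one_sub : ∫ x in (0 : ℝ)..1, x * (1 - x) = 1 / 6 := by
  simp only [mul_sub, mul_one, ← pow_two]
  rw [intervalIntegral.integral_sub (Continuous.intervalIntegrable (by fun_prop) _ _)
    (Continuous.intervalIntegrable (by fun_prop) _ _)]
  norm_num

theorem abs_integral_sub_bernsteinQuadrature_unit_le {n : ℕ} (hn : 0 < n) {g g' g'' : ℝ → ℝ}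
    {M : ℝ} (hg : ∀ x ∈ Icc (0 : ℝ) 1, HasDerivWithinAt g (g' x) (Icc 0 1) x)
    (hg' : ∀ x ∈ Icc (0 : ℝ) 1, HasDerivWithinAt g' (g'' x) (Icc 0 1) x)
    (hM : ∀ x ∈ Icc (0 : ℝ) 1, |g'' x| ≤ M) :
    |(∫ x in (0 : ℝ)..1, g x) - bernsteinQuadrature n 0 1 g| ≤ M / (12 * n) := by
  have hgi : IntervalIntegrable g volume 0 1 :=
    ContinuousOn.intervalIntegrable_of_Icc zero_le_one fun x hx => (hg x hx).continuousWithinAt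
  have hBi : IntervalIntegrable
      (fun x => ∑ i ∈ range (n + 1), (bernsteinPolynomial ℝ n i).eval x * g (i / n)) volume 0 1 :=
    (continuous_finsetSum _ fun i _ =>
      (bernsteinPolynomial ℝ n i).continuous.mul continuous_const).intervalIntegrable _ _
  rw [← integral_sum_bernstein_mul, ← intervalIntegral.integral_sub hgi hBi]
  calc _ ≤ ∫ x in (0 : ℝ)..1, M * (x * (1 - x)) / (2 * n) := by
        rw [← Real.norm_eq_abs]
        refine norm_integral_le_of_norm_le (g := fun x => M * (x * (1 - x)) / (2 * n))
          zero_le_one (ae_of_all _ fun x hx => ?_)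
          (Continuous.intervalIntegrable (by fun_prop) _ _)
        rw [Real.norm_eq_abs, abs_sub_comm]
        exact abs_sum_bernstein_mul_sub_le hn hg hg' hM (Ioc_subset_Icc_self hx)
    _ = M / (12 * n) := by
        rw [intervalIntegral.integral_div, intervalIntegral.integral_const_mul,
          integral_mul_one_sub]
        ring

theorem abs_integral_sub_bernsteinQuadrature_le {n : ℕ} (hn : 0 < n) {a b : ℝ} (hab : a ≤ b)
    {g g' g'' : ℝ → ℝ} {M : ℝ} (hg : ∀ x ∈ Icc a b, HasDerivWithinAt g (g' x) (Icc a b) x)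
    (hg' : ∀ x ∈ Icc a b, HasDerivWithinAt g' (g'' x) (Icc a b) x)
    (hM : ∀ x ∈ Icc a b, |g'' x| ≤ M) :
    |(∫ x in a..b, g x) - bernsteinQuadrature n a b g| ≤ M * (b - a) ^ 3 / (12 * n) := by
  set h := b - a
  have h0 : 0 ≤ h := sub_nonneg.2 hab
  have hmaps : MapsTo (fun t => a + h * t) (Icc 0 1) (Icc a b) := fun t ht =>
    ⟨by nlinarith [ht.1], by nlinarith [ht.2]⟩
  have hlin : ∀ t, HasDerivWithinAt (fun t => a + h * t) h (Icc 0 1) t := fun t =>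
    (((hasDerivWithinAt_id t _).const_mul h).const_add a).congr_deriv (mul_one h)
  have hG : ∀ t ∈ Icc (0 : ℝ) 1, HasDerivWithinAt (fun t => g (a + h * t))
      (h * g' (a + h * t)) (Icc 0 1) t := fun t ht =>
    ((hg _ (hmaps ht)).comp t (hlin t) hmaps).congr_deriv (mul_comm _ _)
  have hG' : ∀ t ∈ Icc (0 : ℝ) 1, HasDerivWithinAt (fun t => h * g' (a + h * t))
      (h ^ 2 * g'' (a + h * t)) (Icc 0 1) t := fun t ht =>
    (((hg' _ (hmaps ht)).comp t (hlin t) hmaps).const_mul h).congr_deriv (by ring)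
  have hGM : ∀ t ∈ Icc (0 : ℝ) 1, |h ^ 2 * g'' (a + h * t)| ≤ h ^ 2 * M := fun t ht => by
    rw [abs_mul, abs_of_nonneg (sq_nonneg h)]
    exact mul_le_mul_of_nonneg_left (hM _ (hmaps ht)) (sq_nonneg h)
  have hint : ∫ x in a..b, g x = h * ∫ t in (0 : ℝ)..1, g (a + h * t) := by
    rw [← smul_eq_mul, smul_integral_comp_add_mul, mul_zero, add_zero, mul_one, add_sub_cancel]
  have hquad : bernsteinQuadrature n a b g =
      h * bernsteinQuadrature n 0 1 (fun t => g (a + h * t)) := by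
    simp only [bernsteinQuadrature, sub_zero, zero_add, one_mul]
    ring
  rw [hint, hquad, ← mul_sub, abs_mul, abs_of_nonneg h0]
  calc h * |(∫ t in (0 : ℝ)..1, g (a + h * t)) - bernsteinQuadrature n 0 1 fun t => g (a + h * t)|
      ≤ h * (h ^ 2 * M / (12 * n)) :=
        mul_le_mul_of_nonneg_left (abs_integral_sub_bernsteinQuadrature_unit_le hn hG hG' hGM) h0
    _ = M * h ^ 3 / (12 * n) := by ring

theorem bernsteinQuadrature_node_mem {n i : ℕ} (hi : i ∈ range (n + 1)) {a b : ℝ} (hab : a ≤ b) :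
    a + (b - a) * (i / n) ∈ Icc a b := by
  obtain ⟨h0, h1⟩ := natCast_div_mem_Icc hi
  have : 0 ≤ b - a := sub_nonneg.2 hab
  exact ⟨by nlinarith, by nlinarith⟩

theorem hasDerivWithinAt_bernsteinQuadrature (n : ℕ) {a b : ℝ} (hab : a ≤ b)
    {f f' : ℝ → ℝ → ℝ} {s : Set ℝ} {x : ℝ}
    (hf : ∀ y ∈ Icc a b, HasDerivWithinAt (fun t => f t y) (f' x y) s x) :
    HasDerivWithinAt (fun t => bernsteinQuadrature n a b (f t))
      (bernsteinQuadrature n a b (f' x)) s x :=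
  (HasDerivWithinAt.fun_sum fun _ hi => hf _ (bernsteinQuadrature_node_mem hi hab)).const_mul _

theorem abs_bernsteinQuadrature_le (n : ℕ) {a b : ℝ} (hab : a ≤ b) {g : ℝ → ℝ} {M : ℝ}
    (hg : ∀ y ∈ Icc a b, |g y| ≤ M) : |bernsteinQuadrature n a b g| ≤ (b - a) * M := by
  have hw : 0 ≤ (b - a) / (n + 1) := div_nonneg (sub_nonneg.2 hab) (by positivity)
  calc |bernsteinQuadrature n a b g|
      ≤ (b - a) / (n + 1) * ∑ i ∈ range (n + 1), |g (a + (b - a) * (i / n))| := by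
        rw [bernsteinQuadrature, abs_mul, abs_of_nonneg hw]
        exact mul_le_mul_of_nonneg_left (abs_sum_le_sum_abs _ _) hw
    _ ≤ (b - a) / (n + 1) * ∑ _i ∈ range (n + 1), M :=
        mul_le_mul_of_nonneg_left
          (sum_le_sum fun _ hi => hg _ (bernsteinQuadrature_node_mem hi hab)) hw
    _ = (b - a) * M := by
        rw [sum_const, card_range, nsmul_eq_mul]
        field_simp
        push_cast
        ring

noncomputable def compositeBernsteinQuadrature (n m : ℕ) (g : ℝ → ℝ) : ℝ :=
  ∑ k ∈ range m, bernsteinQuadrature n (k / m) ((k + 1) / m) g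

theorem natCast_div_le_succ_div (k m : ℕ) : (k / m : ℝ) ≤ (k + 1) / m := by
  gcongr; linarith

theorem Icc_natCast_div_subset_Icc {k m : ℕ} (hk : k ∈ range m) :
    Icc (k / m : ℝ) ((k + 1) / m) ⊆ Icc 0 1 := by
  have : (k : ℝ) + 1 ≤ m := by exact_mod_cast mem_range.1 hk
  exact Icc_subset_Icc (by positivity) (div_le_one_of_le₀ this (Nat.cast_nonneg m))

theorem hasDerivWithinAt_compositeBernsteinQuadrature (n m : ℕ) {f f' : ℝ → ℝ → ℝ}
    {s : Set ℝ} {x : ℝ}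
    (hf : ∀ y ∈ Icc (0 : ℝ) 1, HasDerivWithinAt (fun t => f t y) (f' x y) s x) :
    HasDerivWithinAt (fun t => compositeBernsteinQuadrature n m (f t))
      (compositeBernsteinQuadrature n m (f' x)) s x :=
  HasDerivWithinAt.fun_sum fun k hk => hasDerivWithinAt_bernsteinQuadrature n
    (natCast_div_le_succ_div k m) fun y hy => hf y (Icc_natCast_div_subset_Icc hk hy)

theorem abs_compositeBernsteinQuadrature_le (n : ℕ) {m : ℕ} (hm : 0 < m) {g : ℝ → ℝ} {M : ℝ}
    (hg : ∀ y ∈ Icc (0 : ℝ) 1, |g y| ≤ M) : |compositeBernsteinQuadrature n m g| ≤ M := by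
  calc |compositeBernsteinQuadrature n m g|
      ≤ ∑ k ∈ range m, ((k + 1) / m - k / m : ℝ) * M :=
        (abs_sum_le_sum_abs _ _).trans <| sum_le_sum fun k hk =>
          abs_bernsteinQuadrature_le n (natCast_div_le_succ_div k m)
            fun y hy => hg y (Icc_natCast_div_subset_Icc hk hy)
    _ = M := by
        have : (m : ℝ) ≠ 0 := by positivity
        simp only [← sub_div, add_sub_cancel_left, sum_const, card_range, nsmul_eq_mul]
        field_simp

theorem abs_integral_sub_compositeBernsteinQuadrature_le {n m : ℕ} (hn : 0 < n) (hm : 0 < m)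
    {g g' g'' : ℝ → ℝ} {M : ℝ}
    (hg : ∀ x ∈ Icc (0 : ℝ) 1, HasDerivWithinAt g (g' x) (Icc 0 1) x)
    (hg' : ∀ x ∈ Icc (0 : ℝ) 1, HasDerivWithinAt g' (g'' x) (Icc 0 1) x)
    (hM : ∀ x ∈ Icc (0 : ℝ) 1, |g'' x| ≤ M) :
    |(∫ x in (0 : ℝ)..1, g x) - compositeBernsteinQuadrature n m g| ≤ M / (12 * n * m ^ 2) := by
  have hm' : (m : ℝ) ≠ 0 := by positivity
  have hgc : ContinuousOn g (Icc 0 1) := fun x hx => (hg x hx).continuousWithinAt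
  have hcells : ∑ k ∈ range m, ∫ x in (k / m : ℝ)..((k + 1) / m), g x =
      ∫ x in (0 : ℝ)..1, g x := by
    have := sum_integral_adjacent_intervals (a := fun k : ℕ => (k / m : ℝ)) (f := g)
      (μ := volume) fun k hk => by
        simpa only [Nat.cast_add, Nat.cast_one] using
          (hgc.mono (Icc_natCast_div_subset_Icc (mem_range.2 hk))).intervalIntegrable_of_Icc
            (natCast_div_le_succ_div k m)
    simpa only [Nat.cast_add, Nat.cast_one, CharP.cast_eq_zero, zero_div, ne_eq, hm',
      not_false_eq_true, div_self] using this
  rw [← hcells, compositeBernsteinQuadrature, ← sum_sub_distrib]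
  calc |∑ k ∈ range m, ((∫ x in (k / m : ℝ)..((k + 1) / m), g x) -
        bernsteinQuadrature n (k / m) ((k + 1) / m) g)|
      ≤ ∑ k ∈ range m, M * ((k + 1) / m - k / m : ℝ) ^ 3 / (12 * n) :=
        (abs_sum_le_sum_abs _ _).trans <| sum_le_sum fun k hk =>
          have hsub := Icc_natCast_div_subset_Icc hk
          abs_integral_sub_bernsteinQuadrature_le hn (natCast_div_le_succ_div k m)
            (fun x hx => (hg x (hsub hx)).mono hsub) (fun x hx => (hg' x (hsub hx)).mono hsub)
            fun x hx => hM x (hsub hx)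
    _ = M / (12 * n * m ^ 2) := by
        simp only [← sub_div, add_sub_cancel_left, sum_const, card_range, nsmul_eq_mul]
        field_simp

theorem Ibar_eq_compositeBernsteinQuadrature (n₁ n₂ m₁ m₂ : ℕ) (f : ℝ → ℝ → ℝ) :
    Ibar n₁ n₂ m₁ m₂ f =
      compositeBernsteinQuadrature n₁ m₁ fun x => compositeBernsteinQuadrature n₂ m₂ (f x) := by
  have hshift : ∀ (m : ℕ) (F : ℕ → ℝ), ∑ k ∈ Icc 1 m, F k = ∑ k ∈ range m, F (k + 1) := by
    intro m F
    rw [← Finset.Ico_add_one_right_eq_Icc, sum_Ico_eq_sum_range, Nat.add_sub_cancel]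
    simp only [add_comm 1]
  have hnode : ∀ k i n m : ℕ, (((k + 1 : ℕ) : ℝ) - 1) / m + i / (m * n) =
      k / m + ((k + 1) / m - k / m) * (i / n) := by
    intros; push_cast; ring
  simp only [Ibar, compositeBernsteinQuadrature, bernsteinQuadrature, hshift, mul_sum]
  refine sum_congr rfl fun k _ => ?_
  rw [sum_comm]
  refine sum_congr rfl fun i _ => sum_congr rfl fun l _ => sum_congr rfl fun j _ => ?_
  rw [hnode, hnode, one_div, mul_inv, mul_inv, mul_inv]
  ring

theorem ContinuousOn.intervalIntegral_of_prod {f : ℝ → ℝ → ℝ} {a b c d : ℝ} (hab : a ≤ b)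
    (hcd : c ≤ d) (hf : ContinuousOn (fun p : ℝ × ℝ => f p.1 p.2) (Icc a b ×ˢ Icc c d)) :
    ContinuousOn (fun x => ∫ y in c..d, f x y) (Icc a b) := by
  -- extend `f` continuously to the plane by clamping both coordinates to the rectangle
  have hext : Continuous (Function.uncurry fun x y => f (projIcc a b hab x) (projIcc c d hcd y)) :=
    hf.comp_continuous (by fun_prop) fun p : ℝ × ℝ =>
      mk_mem_prod (projIcc a b hab p.1).2 (projIcc c d hcd p.2).2
  refine (continuous_parametric_intervalIntegral_of_continuous' (μ := volume) hext c d
    ).continuousOn.congr fun x hx => integral_congr fun y hy => ?_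
  rw [uIcc_of_le hcd] at hy
  simp only [projIcc_of_mem hab hx, projIcc_of_mem hcd hy]

theorem abs_le_iSup_abs_of_continuousOn {X : Type*} [TopologicalSpace X] {S : Set X}
    (hS : IsCompact S) {h : X → ℝ} (hh : ContinuousOn h S) {p : X} (hp : p ∈ S) :
    |h p| ≤ ⨆ q : S, |h q| := by
  have hbdd := (hS.image_of_continuousOn hh.abs).bddAbove
  rw [image_eq_range] at hbdd
  exact le_ciSup hbdd ⟨p, hp⟩

theorem abs_integral_integral_sub_compositeBernsteinQuadrature_le {n₁ n₂ m₁ m₂ : ℕ}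
    (hn₁ : 0 < n₁) (hn₂ : 0 < n₂) (hm₁ : 0 < m₁) (hm₂ : 0 < m₂) {f fx fxx fy fyy : ℝ → ℝ → ℝ}
    {Mxx Myy : ℝ}
    (hfc : ContinuousOn (fun p : ℝ × ℝ => f p.1 p.2) (Icc (0 : ℝ) 1 ×ˢ Icc (0 : ℝ) 1))
    (hfx : ∀ y ∈ Icc (0 : ℝ) 1, ∀ x ∈ Icc (0 : ℝ) 1,
      HasDerivWithinAt (fun t => f t y) (fx x y) (Icc 0 1) x)
    (hfxx : ∀ y ∈ Icc (0 : ℝ) 1, ∀ x ∈ Icc (0 : ℝ) 1,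
      HasDerivWithinAt (fun t => fx t y) (fxx x y) (Icc 0 1) x)
    (hfy : ∀ x ∈ Icc (0 : ℝ) 1, ∀ y ∈ Icc (0 : ℝ) 1,
      HasDerivWithinAt (fun t => f x t) (fy x y) (Icc 0 1) y)
    (hfyy : ∀ x ∈ Icc (0 : ℝ) 1, ∀ y ∈ Icc (0 : ℝ) 1,
      HasDerivWithinAt (fun t => fy x t) (fyy x y) (Icc 0 1) y)
    (hMxx : ∀ x ∈ Icc (0 : ℝ) 1, ∀ y ∈ Icc (0 : ℝ) 1, |fxx x y| ≤ Mxx)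
    (hMyy : ∀ x ∈ Icc (0 : ℝ) 1, ∀ y ∈ Icc (0 : ℝ) 1, |fyy x y| ≤ Myy) :
    |(∫ x in (0 : ℝ)..1, ∫ y in (0 : ℝ)..1, f x y) -
        compositeBernsteinQuadrature n₁ m₁ fun x => compositeBernsteinQuadrature n₂ m₂ (f x)| ≤
      Mxx / (12 * n₁ * m₁ ^ 2) + Myy / (12 * n₂ * m₂ ^ 2) := by
  set Q := fun x => compositeBernsteinQuadrature n₂ m₂ (f x)
  have hQ : ∀ x ∈ Icc (0 : ℝ) 1, HasDerivWithinAt Q (compositeBernsteinQuadrature n₂ m₂ (fx x))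
      (Icc 0 1) x := fun x hx =>
    hasDerivWithinAt_compositeBernsteinQuadrature n₂ m₂ fun y hy => hfx y hy x hx
  have houter := abs_integral_sub_compositeBernsteinQuadrature_le hn₁ hm₁ hQ
    (fun x hx => hasDerivWithinAt_compositeBernsteinQuadrature n₂ m₂ fun y hy => hfxx y hy x hx)
    fun x hx => abs_compositeBernsteinQuadrature_le n₂ hm₂ (hMxx x hx)
  have hinner : ∀ x ∈ uIoc (0 : ℝ) 1,
      ‖(∫ y in (0 : ℝ)..1, f x y) - Q x‖ ≤ Myy / (12 * n₂ * m₂ ^ 2) := fun x hx => by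
    rw [uIoc_of_le zero_le_one] at hx
    exact abs_integral_sub_compositeBernsteinQuadrature_le hn₂ hm₂
      (hfy x (Ioc_subset_Icc_self hx)) (hfyy x (Ioc_subset_Icc_self hx))
      (hMyy x (Ioc_subset_Icc_self hx))
  have hFi : IntervalIntegrable (fun x => ∫ y in (0 : ℝ)..1, f x y) volume 0 1 :=
    (hfc.intervalIntegral_of_prod zero_le_one zero_le_one).intervalIntegrable_of_Icc zero_le_one
  have hQi : IntervalIntegrable Q volume 0 1 :=
    ContinuousOn.intervalIntegrable_of_Icc zero_le_one fun x hx => (hQ x hx).continuousWithinAt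
  calc _ ≤ |∫ x in (0 : ℝ)..1, ((∫ y in (0 : ℝ)..1, f x y) - Q x)| +
        |(∫ x in (0 : ℝ)..1, Q x) - compositeBernsteinQuadrature n₁ m₁ Q| := by
        rw [intervalIntegral.integral_sub hFi hQi]
        exact abs_sub_le _ _ _
    _ ≤ Myy / (12 * n₂ * m₂ ^ 2) + Mxx / (12 * n₁ * m₁ ^ 2) := by
        gcongr
        simpa using norm_integral_le_of_norm_le_const hinner
    _ = Mxx / (12 * n₁ * m₁ ^ 2) + Myy / (12 * n₂ * m₂ ^ 2) := add_comm _ _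

theorem stmt9_general (n₁ n₂ m₁ m₂ : ℕ) (hn₁ : 0 < n₁) (hn₂ : 0 < n₂) (hm₁ : 0 < m₁) (hm₂ : 0 < m₂)
    (f fx fxx fy fyy fxxyy : ℝ → ℝ → ℝ)
    (hfc : ContinuousOn (fun p : ℝ × ℝ => f p.1 p.2)
      (Set.Icc (0:ℝ) 1 ×ˢ Set.Icc (0:ℝ) 1))
    (hfx : ∀ y ∈ Set.Icc (0:ℝ) 1, ∀ x ∈ Set.Icc (0:ℝ) 1,
      HasDerivWithinAt (fun t => f t y) (fx x y) (Set.Icc (0:ℝ) 1) x)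
    (hfxx : ∀ y ∈ Set.Icc (0:ℝ) 1, ∀ x ∈ Set.Icc (0:ℝ) 1,
      HasDerivWithinAt (fun t => fx t y) (fxx x y) (Set.Icc (0:ℝ) 1) x)
    (hfy : ∀ x ∈ Set.Icc (0:ℝ) 1, ∀ y ∈ Set.Icc (0:ℝ) 1,
      HasDerivWithinAt (fun t => f x t) (fy x y) (Set.Icc (0:ℝ) 1) y)
    (hfyy : ∀ x ∈ Set.Icc (0:ℝ) 1, ∀ y ∈ Set.Icc (0:ℝ) 1,
      HasDerivWithinAt (fun t => fy x t) (fyy x y) (Set.Icc (0:ℝ) 1) y)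
    (hfxxc : ContinuousOn (fun p : ℝ × ℝ => fxx p.1 p.2)
      (Set.Icc (0:ℝ) 1 ×ˢ Set.Icc (0:ℝ) 1))
    (hfyyc : ContinuousOn (fun p : ℝ × ℝ => fyy p.1 p.2)
      (Set.Icc (0:ℝ) 1 ×ˢ Set.Icc (0:ℝ) 1)) :
    |(∫ x in (0:ℝ)..1, ∫ y in (0:ℝ)..1, f x y) - Ibar n₁ n₂ m₁ m₂ f| ≤
      (1 / (12 * n₁ * m₁ ^ 2)) *
          (⨆ p : (Set.Icc (0:ℝ) 1 ×ˢ Set.Icc (0:ℝ) 1 : Set (ℝ × ℝ)),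
            |fxx (p : ℝ × ℝ).1 (p : ℝ × ℝ).2|) +
        (1 / (12 * n₂ * m₂ ^ 2)) *
          (⨆ p : (Set.Icc (0:ℝ) 1 ×ˢ Set.Icc (0:ℝ) 1 : Set (ℝ × ℝ)),
            |fyy (p : ℝ × ℝ).1 (p : ℝ × ℝ).2|) +
        (1 / (144 * n₁ * n₂ * m₁ ^ 2 * m₂ ^ 2)) *
          (⨆ p : (Set.Icc (0:ℝ) 1 ×ˢ Set.Icc (0:ℝ) 1 : Set (ℝ × ℝ)),
            |fxxyy (p : ℝ × ℝ).1 (p : ℝ × ℝ).2|) := by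
  have hS : IsCompact (Icc (0 : ℝ) 1 ×ˢ Icc (0 : ℝ) 1) := isCompact_Icc.prod isCompact_Icc
  have h12 := abs_integral_integral_sub_compositeBernsteinQuadrature_le hn₁ hn₂ hm₁ hm₂ hfc
    hfx hfxx hfy hfyy
    (fun x hx y hy => abs_le_iSup_abs_of_continuousOn hS hfxxc (mk_mem_prod hx hy))
    (fun x hx y hy => abs_le_iSup_abs_of_continuousOn hS hfyyc (mk_mem_prod hx hy))
  have hmixed : 0 ≤ ⨆ p : (Icc (0 : ℝ) 1 ×ˢ Icc (0 : ℝ) 1 : Set (ℝ × ℝ)),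
      |fxxyy (p : ℝ × ℝ).1 (p : ℝ × ℝ).2| := Real.iSup_nonneg fun _ => abs_nonneg _
  rw [Ibar_eq_compositeBernsteinQuadrature]
  simp only [one_div_mul_eq_div]
  linarith [div_nonneg hmixed (by positivity : (0 : ℝ) ≤ 144 * n₁ * n₂ * m₁ ^ 2 * m₂ ^ 2)]

/-- three-term error bound for the composite Bernstein cubature formula,
for `f ∈ C^{2,2}([0,1]²)`. -/
theorem stmt9 (n₁ n₂ m₁ m₂ : ℕ) (hn₁ : 0 < n₁) (hn₂ : 0 < n₂) (hm₁ : 0 < m₁) (hm₂ : 0 < m₂)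
    (f fx fxx fy fyy fxxy fxxyy : ℝ → ℝ → ℝ)
    (hfc : ContinuousOn (fun p : ℝ × ℝ => f p.1 p.2)
      (Set.Icc (0:ℝ) 1 ×ˢ Set.Icc (0:ℝ) 1))
    (hfx : ∀ y ∈ Set.Icc (0:ℝ) 1, ∀ x ∈ Set.Icc (0:ℝ) 1,
      HasDerivWithinAt (fun t => f t y) (fx x y) (Set.Icc (0:ℝ) 1) x)
    (hfxx : ∀ y ∈ Set.Icc (0:ℝ) 1, ∀ x ∈ Set.Icc (0:ℝ) 1,
      HasDerivWithinAt (fun t => fx t y) (fxx x y) (Set.Icc (0:ℝ) 1) x)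
    (hfy : ∀ x ∈ Set.Icc (0:ℝ) 1, ∀ y ∈ Set.Icc (0:ℝ) 1,
      HasDerivWithinAt (fun t => f x t) (fy x y) (Set.Icc (0:ℝ) 1) y)
    (hfyy : ∀ x ∈ Set.Icc (0:ℝ) 1, ∀ y ∈ Set.Icc (0:ℝ) 1,
      HasDerivWithinAt (fun t => fy x t) (fyy x y) (Set.Icc (0:ℝ) 1) y)
    (hfxxy : ∀ x ∈ Set.Icc (0:ℝ) 1, ∀ y ∈ Set.Icc (0:ℝ) 1,
      HasDerivWithinAt (fun t => fxx x t) (fxxy x y) (Set.Icc (0:ℝ) 1) y)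
    (hfxxyy : ∀ x ∈ Set.Icc (0:ℝ) 1, ∀ y ∈ Set.Icc (0:ℝ) 1,
      HasDerivWithinAt (fun t => fxxy x t) (fxxyy x y) (Set.Icc (0:ℝ) 1) y)
    (hfxxc : ContinuousOn (fun p : ℝ × ℝ => fxx p.1 p.2)
      (Set.Icc (0:ℝ) 1 ×ˢ Set.Icc (0:ℝ) 1))
    (hfyyc : ContinuousOn (fun p : ℝ × ℝ => fyy p.1 p.2)
      (Set.Icc (0:ℝ) 1 ×ˢ Set.Icc (0:ℝ) 1))
    (hfxxyyc : ContinuousOn (fun p : ℝ × ℝ => fxxyy p.1 p.2)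
      (Set.Icc (0:ℝ) 1 ×ˢ Set.Icc (0:ℝ) 1)) :
    |(∫ x in (0:ℝ)..1, ∫ y in (0:ℝ)..1, f x y) - Ibar n₁ n₂ m₁ m₂ f| ≤
      (1 / (12 * n₁ * m₁ ^ 2)) *
          (⨆ p : (Set.Icc (0:ℝ) 1 ×ˢ Set.Icc (0:ℝ) 1 : Set (ℝ × ℝ)),
            |fxx (p : ℝ × ℝ).1 (p : ℝ × ℝ).2|) +
        (1 / (12 * n₂ * m₂ ^ 2)) *
          (⨆ p : (Set.Icc (0:ℝ) 1 ×ˢ Set.Icc (0:ℝ) 1 : Set (ℝ × ℝ)),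
            |fyy (p : ℝ × ℝ).1 (p : ℝ × ℝ).2|) +
        (1 / (144 * n₁ * n₂ * m₁ ^ 2 * m₂ ^ 2)) *
          (⨆ p : (Set.Icc (0:ℝ) 1 ×ˢ Set.Icc (0:ℝ) 1 : Set (ℝ × ℝ)),
            |fxxyy (p : ℝ × ℝ).1 (p : ℝ × ℝ).2|) :=
  stmt9_general n₁ n₂ m₁ m₂ hn₁ hn₂ hm₁ hm₂ f fx fxx fy fyy fxxyy hfc hfx hfxx hfy hfyy hfxxc hfyyc
end

section
/- Let $(X,d)$ be a compact metric space and $L : C(X) \to \mathbb{R}$ a positive linear functional reproducing constants, $L(f) = \int_X f\,d\mu$ with $\mu$ a probability measure. Then for all $f, g \in C(X)$: $|L(fg) - L(f)L(g)| \le K\left(\sqrt{L^2(d^2)},\, f; C(X), \mathrm{Lip}_1\right) \cdot K\left(\sqrt{L^2(d^2)},\, g; C(X), \mathrm{Lip}_1\right)$, where $L^2(d^2) = \int_X\int_X d^2(t,u)\,d\mu(u)\,d\mu(t)$. -/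
open MeasureTheory

section Aux

variable {X : Type*} [MetricSpace X] [CompactSpace X]
    [MeasurableSpace X] [BorelSpace X]
    (μ : Measure X) [IsProbabilityMeasure μ]

lemma cont_int {a : X → ℝ} (ha : Continuous a) : Integrable a μ :=
  ha.integrable_of_hasCompactSupport (IsClosed.isCompact (isClosed_tsupport _))

/-- Cauchy–Schwarz for integrals of continuous functions. -/
lemma cs {a b : X → ℝ} (ha : Continuous a) (hb : Continuous b) :
    |∫ x, a x * b x ∂μ| ≤
      Real.sqrt (∫ x, a x ^ 2 ∂μ) * Real.sqrt (∫ x, b x ^ 2 ∂μ) := by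
  set A := ∫ x, a x ^ 2 ∂μ with hA
  set B := ∫ x, a x * b x ∂μ with hB
  set C := ∫ x, b x ^ 2 ∂μ with hC
  have hAnn : 0 ≤ A := integral_nonneg fun x => sq_nonneg _
  have hCnn : 0 ≤ C := integral_nonneg fun x => sq_nonneg _
  have key : B ^ 2 ≤ A * C := by
    have h : ∀ t : ℝ, 0 ≤ A * (t * t) + (2 * B) * t + C := by
      intro t
      have h0 : 0 ≤ ∫ x, (t * a x + b x) ^ 2 ∂μ :=
        integral_nonneg fun x => sq_nonneg _
      have hexp : ∫ x, (t * a x + b x) ^ 2 ∂μ = A * (t * t) + (2 * B) * t + C := by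
        have : ∀ x, (t * a x + b x) ^ 2
            = (t * t) * a x ^ 2 + (2 * t) * (a x * b x) + b x ^ 2 := by
          intro x; ring
        rw [integral_congr_ae (Filter.Eventually.of_forall this)]
        rw [integral_add (f := fun x => (t*t) * a x ^ 2 + (2*t) * (a x * b x))
              (g := fun x => b x ^ 2)
              (((cont_int μ (ha.pow 2)).const_mul _).add
                ((cont_int μ (ha.mul hb)).const_mul _)) (cont_int μ (hb.pow 2)),
            integral_add (f := fun x => (t*t) * a x ^ 2)
              (g := fun x => (2*t) * (a x * b x))
              ((cont_int μ (ha.pow 2)).const_mul _)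
              ((cont_int μ (ha.mul hb)).const_mul _),
            integral_const_mul, integral_const_mul]
        rw [hA, hB, hC]
        ring_nf
      linarith [hexp ▸ h0]
    have hd := discrim_le_zero h
    rw [discrim] at hd
    nlinarith
  calc |B| = Real.sqrt (B ^ 2) := (Real.sqrt_sq_eq_abs _).symm
    _ ≤ Real.sqrt (A * C) := Real.sqrt_le_sqrt key
    _ = Real.sqrt A * Real.sqrt C := Real.sqrt_mul hAnn _

/-- Jensen: square of the mean is at most the mean of the square. -/
lemma jensen_sq {h : X → ℝ} (hh : Continuous h) :
    (∫ x, h x ∂μ) ^ 2 ≤ ∫ x, h x ^ 2 ∂μ := by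
  have := cs μ hh continuous_const (b := fun _ => (1 : ℝ))
  simp only [mul_one] at this
  have h1 : ∫ x, (1 : ℝ) ^ 2 ∂μ = 1 := by simp
  rw [h1, Real.sqrt_one, mul_one] at this
  have h2 : |∫ x, h x ∂μ| ^ 2 ≤ Real.sqrt (∫ x, h x ^ 2 ∂μ) ^ 2 := by
    have := abs_nonneg (∫ x, h x ∂μ)
    nlinarith
  rwa [Real.sq_sqrt (integral_nonneg fun x => sq_nonneg _), sq_abs] at h2

/-- L² triangle inequality. -/
lemma l2_tri {u v : X → ℝ} (hu : Continuous u) (hv : Continuous v) :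
    Real.sqrt (∫ x, (u x + v x) ^ 2 ∂μ) ≤
      Real.sqrt (∫ x, u x ^ 2 ∂μ) + Real.sqrt (∫ x, v x ^ 2 ∂μ) := by
  have hU : 0 ≤ ∫ x, u x ^ 2 ∂μ := integral_nonneg fun x => sq_nonneg _
  have hV : 0 ≤ ∫ x, v x ^ 2 ∂μ := integral_nonneg fun x => sq_nonneg _
  have hcs := cs μ hu hv
  have hexp : ∫ x, (u x + v x) ^ 2 ∂μ
      = (∫ x, u x ^ 2 ∂μ) + 2 * (∫ x, u x * v x ∂μ) + ∫ x, v x ^ 2 ∂μ := by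
    have : ∀ x, (u x + v x) ^ 2 = u x ^ 2 + 2 * (u x * v x) + v x ^ 2 := by
      intro x; ring
    rw [integral_congr_ae (Filter.Eventually.of_forall this)]
    rw [integral_add (f := fun x => u x ^ 2 + 2 * (u x * v x)) (g := fun x => v x ^ 2)
          ((cont_int μ (hu.pow 2)).add
            ((cont_int μ (hu.mul hv)).const_mul _)) (cont_int μ (hv.pow 2)),
        integral_add (f := fun x => u x ^ 2) (g := fun x => 2 * (u x * v x))
          (cont_int μ (hu.pow 2)) ((cont_int μ (hu.mul hv)).const_mul _),
        integral_const_mul]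
  have hb : ∫ x, (u x + v x) ^ 2 ∂μ
      ≤ (Real.sqrt (∫ x, u x ^ 2 ∂μ) + Real.sqrt (∫ x, v x ^ 2 ∂μ)) ^ 2 := by
    rw [hexp]
    have h1 : ∫ x, u x * v x ∂μ ≤ |∫ x, u x * v x ∂μ| := le_abs_self _
    have s1 := Real.sq_sqrt hU
    have s2 := Real.sq_sqrt hV
    nlinarith
  calc Real.sqrt (∫ x, (u x + v x) ^ 2 ∂μ)
      ≤ Real.sqrt ((Real.sqrt (∫ x, u x ^ 2 ∂μ) + Real.sqrt (∫ x, v x ^ 2 ∂μ)) ^ 2) :=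
        Real.sqrt_le_sqrt hb
    _ = _ := Real.sqrt_sq (by positivity)


/-- Continuity of `t ↦ ∫ u, dist t u ^ 2 ∂μ`. -/
lemma dint_cont : Continuous fun t => ∫ u, dist t u ^ 2 ∂μ := by
  obtain ⟨C, hC⟩ : ∃ C, ∀ t u : X, dist t u ≤ C := by
    obtain ⟨C, hC⟩ := Metric.isBounded_iff.mp (isCompact_univ (X := X)).isBounded
    exact ⟨C, fun t u => hC trivial trivial⟩
  apply continuous_of_dominated (bound := fun _ => C ^ 2)
  · intro t
    exact ((continuous_const.dist continuous_id).pow 2).aestronglyMeasurable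
  · intro t
    filter_upwards with u
    rw [Real.norm_eq_abs, abs_of_nonneg (by positivity)]
    exact pow_le_pow_left₀ dist_nonneg (hC t u) 2
  · exact integrable_const _
  · filter_upwards with u
    exact (continuous_id.dist continuous_const).pow 2

/-- Variance bound for a Lipschitz function. -/
lemma lip_var {r : X → ℝ} {K : NNReal} (hr : LipschitzWith K r) :
    ∫ t, (r t - ∫ u, r u ∂μ) ^ 2 ∂μ
      ≤ (K : ℝ) ^ 2 * ∫ t, (∫ u, dist t u ^ 2 ∂μ) ∂μ := by
  have hrc := hr.continuous
  have hpt : ∀ t, (r t - ∫ u, r u ∂μ) ^ 2 ≤ (K : ℝ) ^ 2 * ∫ u, dist t u ^ 2 ∂μ := by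
    intro t
    have h1 : r t - ∫ u, r u ∂μ = ∫ u, (r t - r u) ∂μ := by
      rw [integral_sub (integrable_const _) (cont_int μ hrc), integral_const]
      simp
    have h2 : (∫ u, (r t - r u) ∂μ) ^ 2 ≤ ∫ u, (r t - r u) ^ 2 ∂μ :=
      jensen_sq μ (continuous_const.sub hrc)
    have h3 : ∫ u, (r t - r u) ^ 2 ∂μ ≤ ∫ u, (K : ℝ) ^ 2 * dist t u ^ 2 ∂μ := by
      apply integral_mono (cont_int μ ((continuous_const.sub hrc).pow 2))
        (cont_int μ (continuous_const.mul ((continuous_const.dist continuous_id).pow 2)))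
      intro u
      have hd := hr.dist_le_mul t u
      rw [Real.dist_eq] at hd
      have h4 := pow_le_pow_left₀ (abs_nonneg (r t - r u)) hd 2
      rw [sq_abs] at h4
      calc (r t - r u) ^ 2 ≤ ((K : ℝ) * dist t u) ^ 2 := h4
        _ = (K : ℝ) ^ 2 * dist t u ^ 2 := by ring
    rw [h1]
    calc (∫ u, (r t - r u) ∂μ) ^ 2 ≤ ∫ u, (K : ℝ) ^ 2 * dist t u ^ 2 ∂μ :=
          le_trans h2 h3
      _ = (K : ℝ) ^ 2 * ∫ u, dist t u ^ 2 ∂μ := integral_const_mul _ _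
  have hmono := integral_mono
    (cont_int μ ((hrc.sub continuous_const).pow 2))
    (cont_int μ (continuous_const.mul (dint_cont μ))) hpt
  calc ∫ t, (r t - ∫ u, r u ∂μ) ^ 2 ∂μ
      ≤ ∫ t, (K : ℝ) ^ 2 * (∫ u, dist t u ^ 2 ∂μ) ∂μ := hmono
    _ = (K : ℝ) ^ 2 * ∫ t, (∫ u, dist t u ^ 2 ∂μ) ∂μ := integral_const_mul _ _

/-- The centered L² norm is at most the sup norm. -/
lemma centered_le_sup [Nonempty X] {φ : X → ℝ} (hφ : Continuous φ) :
    Real.sqrt (∫ x, (φ x - ∫ y, φ y ∂μ) ^ 2 ∂μ) ≤ ⨆ x, |φ x| := by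
  set c := ∫ y, φ y ∂μ with hc
  set S := ⨆ x, |φ x| with hS
  have hbd : BddAbove (Set.range fun x => |φ x|) := (isCompact_range hφ.abs).bddAbove
  have hle : ∀ x, |φ x| ≤ S := fun x => le_ciSup hbd x
  have hS0 : 0 ≤ S := le_trans (abs_nonneg _) (hle (Classical.arbitrary X))
  have hexp : ∫ x, (φ x - c) ^ 2 ∂μ = (∫ x, φ x ^ 2 ∂μ) - c ^ 2 := by
    have hpt : ∀ x, (φ x - c) ^ 2 = φ x ^ 2 + (-2 * c) * φ x + c ^ 2 := fun x => by ring
    rw [integral_congr_ae (Filter.Eventually.of_forall hpt),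
        integral_add (f := fun x => φ x ^ 2 + (-2 * c) * φ x) (g := fun _ => c ^ 2)
          ((cont_int μ (hφ.pow 2)).add ((cont_int μ hφ).const_mul _)) (integrable_const _),
        integral_add (f := fun x => φ x ^ 2) (g := fun x => (-2 * c) * φ x)
          (cont_int μ (hφ.pow 2)) ((cont_int μ hφ).const_mul _),
        integral_const_mul, integral_const]
    rw [← hc]
    simp [measure_univ]
    ring
  have h2 : ∫ x, (φ x - c) ^ 2 ∂μ ≤ S ^ 2 := by
    rw [hexp]
    have h3 : ∫ x, φ x ^ 2 ∂μ ≤ S ^ 2 := by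
      have hpt : ∀ x, φ x ^ 2 ≤ S ^ 2 := by
        intro x
        nlinarith [hle x, abs_nonneg (φ x), sq_abs (φ x)]
      calc ∫ x, φ x ^ 2 ∂μ ≤ ∫ _x, S ^ 2 ∂μ :=
            integral_mono (cont_int μ (hφ.pow 2)) (integrable_const _) hpt
        _ = S ^ 2 := by simp [measure_univ]
    nlinarith [sq_nonneg c]
  calc Real.sqrt (∫ x, (φ x - c) ^ 2 ∂μ) ≤ Real.sqrt (S ^ 2) := Real.sqrt_le_sqrt h2
    _ = S := Real.sqrt_sq hS0

/-- Main estimate: the centered L² norm of `f` is bounded by any K-functional competitor. -/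
lemma sqrt_var_le [Nonempty X] {f : X → ℝ} (hf : Continuous f)
    {r : X → ℝ} {K : NNReal} (hr : LipschitzWith K r) :
    Real.sqrt (∫ x, (f x - ∫ y, f y ∂μ) ^ 2 ∂μ)
      ≤ (⨆ x, |f x - r x|) +
        Real.sqrt (∫ t, (∫ u, dist t u ^ 2 ∂μ) ∂μ) * K := by
  have hrc := hr.continuous
  set T2 := ∫ t, (∫ u, dist t u ^ 2 ∂μ) ∂μ with hT2
  have hT2nn : 0 ≤ T2 := by
    rw [hT2]
    exact integral_nonneg fun t => integral_nonneg fun u => sq_nonneg _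
  have hsplit : ∀ x, f x - ∫ y, f y ∂μ
      = ((f x - r x) - ∫ y, (f y - r y) ∂μ) + (r x - ∫ y, r y ∂μ) := by
    intro x
    rw [integral_sub (cont_int μ hf) (cont_int μ hrc)]
    ring
  have step1 : Real.sqrt (∫ x, (f x - ∫ y, f y ∂μ) ^ 2 ∂μ)
      ≤ Real.sqrt (∫ x, ((f x - r x) - ∫ y, (f y - r y) ∂μ) ^ 2 ∂μ)
        + Real.sqrt (∫ x, (r x - ∫ y, r y ∂μ) ^ 2 ∂μ) := by
    have := l2_tri μ (u := fun x => (f x - r x) - ∫ y, (f y - r y) ∂μ)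
      (v := fun x => r x - ∫ y, r y ∂μ)
      ((hf.sub hrc).sub continuous_const) (hrc.sub continuous_const)
    have heq : ∫ x, (f x - ∫ y, f y ∂μ) ^ 2 ∂μ
        = ∫ x, (((f x - r x) - ∫ y, (f y - r y) ∂μ) + (r x - ∫ y, r y ∂μ)) ^ 2 ∂μ := by
      exact integral_congr_ae (Filter.Eventually.of_forall fun x => by simp only [hsplit x])
    rw [heq]
    exact this
  have step2 : Real.sqrt (∫ x, ((f x - r x) - ∫ y, (f y - r y) ∂μ) ^ 2 ∂μ)
      ≤ ⨆ x, |f x - r x| := centered_le_sup μ (hf.sub hrc)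
  have step3 : Real.sqrt (∫ x, (r x - ∫ y, r y ∂μ) ^ 2 ∂μ) ≤ Real.sqrt T2 * K := by
    have hlv := lip_var μ hr
    calc Real.sqrt (∫ x, (r x - ∫ y, r y ∂μ) ^ 2 ∂μ)
        ≤ Real.sqrt ((K : ℝ) ^ 2 * T2) := Real.sqrt_le_sqrt hlv
      _ = Real.sqrt ((K : ℝ) ^ 2) * Real.sqrt T2 := Real.sqrt_mul (sq_nonneg _) _
      _ = Real.sqrt T2 * K := by
          rw [Real.sqrt_sq K.coe_nonneg]; ring
  linarith

/-- Product of infima. -/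
lemma kf_inf_mul {S T : Set ℝ} (hS : S.Nonempty) (hT : T.Nonempty)
    (hS0 : ∀ v ∈ S, 0 ≤ v) (hT0 : ∀ w ∈ T, 0 ≤ w) {c : ℝ}
    (h : ∀ v ∈ S, ∀ w ∈ T, c ≤ v * w) : c ≤ sInf S * sInf T := by
  have hiS : 0 ≤ sInf S := le_csInf hS hS0
  have hiT : 0 ≤ sInf T := le_csInf hT hT0
  have step1 : ∀ w ∈ T, c ≤ sInf S * w := by
    intro w hw
    rcases (hT0 w hw).eq_or_lt with h0 | h0
    · obtain ⟨v, hv⟩ := hS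
      have hc := h v hv w hw
      rw [← h0] at hc ⊢
      simpa using hc
    · have hdiv : c / w ≤ sInf S :=
        le_csInf hS fun v hv => (div_le_iff₀ h0).mpr (h v hv w hw)
      calc c = c / w * w := by field_simp
        _ ≤ sInf S * w := mul_le_mul_of_nonneg_right hdiv h0.le
  rcases hiS.eq_or_lt with h0 | h0
  · obtain ⟨w, hw⟩ := hT
    have hc := step1 w hw
    rw [← h0] at hc ⊢
    simpa using hc
  · have hdiv : c / sInf S ≤ sInf T :=
      le_csInf hT fun w hw => (div_le_iff₀ h0).mpr (by linarith [step1 w hw, mul_comm (sInf S) w])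
    calc c = c / sInf S * sInf S := by field_simp
      _ ≤ sInf T * sInf S := mul_le_mul_of_nonneg_right hdiv h0.le
      _ = sInf S * sInf T := mul_comm _ _

end Aux

/-- The K-functional of `f` with respect to `(C(X), Lip₁)`: the infimum of
`‖f - r‖∞ + t·K` over Lipschitz functions `r` with Lipschitz constant `K`. -/
noncomputable def Kfunctional {X : Type*} [MetricSpace X] (t : ℝ) (f : X → ℝ) : ℝ :=
  sInf {v | ∃ (r : X → ℝ) (K : NNReal), LipschitzWith K r ∧
    v = (⨆ x, |f x - r x|) + t * K}

/-- Grüss-type inequality in terms of K-functionals for a positive linear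
functional `L f = ∫ f dμ` reproducing constants on a compact metric space. -/
theorem stmt13 {X : Type*} [MetricSpace X] [CompactSpace X]
    [MeasurableSpace X] [BorelSpace X]
    (μ : Measure X) [IsProbabilityMeasure μ]
    (f g : X → ℝ) (hf : Continuous f) (hg : Continuous g) :
    |(∫ x, f x * g x ∂μ) - (∫ x, f x ∂μ) * (∫ x, g x ∂μ)| ≤
      Kfunctional (Real.sqrt (∫ t, (∫ u, dist t u ^ 2 ∂μ) ∂μ)) f *
        Kfunctional (Real.sqrt (∫ t, (∫ u, dist t u ^ 2 ∂μ) ∂μ)) g := by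
  have hne : Nonempty X := by
    by_contra h
    rw [not_nonempty_iff] at h
    have h1 : μ Set.univ = 1 := measure_univ
    rw [Set.univ_eq_empty_iff.mpr h] at h1
    simp at h1
  have hT0 : 0 ≤ Real.sqrt (∫ t, (∫ u, dist t u ^ 2 ∂μ) ∂μ) := Real.sqrt_nonneg _
  -- covariance identity
  have hcov : (∫ x, f x * g x ∂μ) - (∫ x, f x ∂μ) * (∫ x, g x ∂μ)
      = ∫ x, (f x - ∫ y, f y ∂μ) * (g x - ∫ y, g y ∂μ) ∂μ := by
    set F := ∫ y, f y ∂μ with hF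
    set G := ∫ y, g y ∂μ with hG
    have hpt : ∀ x, (f x - F) * (g x - G)
        = f x * g x + (-G) * f x + ((-F) * g x + F * G) := fun x => by ring
    rw [integral_congr_ae (Filter.Eventually.of_forall hpt),
        integral_add (f := fun x => f x * g x + (-G) * f x)
          (g := fun x => (-F) * g x + F * G)
          ((cont_int μ (hf.mul hg)).add ((cont_int μ hf).const_mul _))
          (((cont_int μ hg).const_mul _).add (integrable_const _)),
        integral_add (f := fun x => f x * g x) (g := fun x => (-G) * f x)
          (cont_int μ (hf.mul hg)) ((cont_int μ hf).const_mul _),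
        integral_add (f := fun x => (-F) * g x) (g := fun _ => F * G)
          ((cont_int μ hg).const_mul _) (integrable_const _),
        integral_const_mul, integral_const_mul, integral_const]
    rw [← hF, ← hG]
    simp [measure_univ]
    ring
  rw [hcov]
  unfold Kfunctional
  apply kf_inf_mul
  · exact ⟨_, fun _ => 0, 0, LipschitzWith.const' 0, rfl⟩
  · exact ⟨_, fun _ => 0, 0, LipschitzWith.const' 0, rfl⟩
  · rintro v ⟨r, K, hr, rfl⟩
    have hbd : BddAbove (Set.range fun x => |f x - r x|) :=
      (isCompact_range (hf.sub hr.continuous).abs).bddAbove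
    have h0 : 0 ≤ ⨆ x, |f x - r x| :=
      le_trans (abs_nonneg _) (le_ciSup hbd (Classical.arbitrary X))
    positivity
  · rintro w ⟨s, Ks, hs, rfl⟩
    have hbd : BddAbove (Set.range fun x => |g x - s x|) :=
      (isCompact_range (hg.sub hs.continuous).abs).bddAbove
    have h0 : 0 ≤ ⨆ x, |g x - s x| :=
      le_trans (abs_nonneg _) (le_ciSup hbd (Classical.arbitrary X))
    positivity
  · rintro v ⟨r, K, hr, rfl⟩ w ⟨s, Ks, hs, rfl⟩
    have hbd : BddAbove (Set.range fun x => |f x - r x|) :=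
      (isCompact_range (hf.sub hr.continuous).abs).bddAbove
    have h0 : 0 ≤ ⨆ x, |f x - r x| :=
      le_trans (abs_nonneg _) (le_ciSup hbd (Classical.arbitrary X))
    calc |∫ x, (f x - ∫ y, f y ∂μ) * (g x - ∫ y, g y ∂μ) ∂μ|
        ≤ Real.sqrt (∫ x, (f x - ∫ y, f y ∂μ) ^ 2 ∂μ) *
            Real.sqrt (∫ x, (g x - ∫ y, g y ∂μ) ^ 2 ∂μ) :=
          cs μ (hf.sub continuous_const) (hg.sub continuous_const)
      _ ≤ ((⨆ x, |f x - r x|) + Real.sqrt (∫ t, (∫ u, dist t u ^ 2 ∂μ) ∂μ) * K) *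
            ((⨆ x, |g x - s x|) + Real.sqrt (∫ t, (∫ u, dist t u ^ 2 ∂μ) ∂μ) * Ks) := by
          apply mul_le_mul (sqrt_var_le μ hf hr) (sqrt_var_le μ hg hs)
            (Real.sqrt_nonneg _)
          positivity
end

section
/- For the composite Bernstein cubature functional $\overline{\mathcal{I}}$ on $[0,1]^2$ with the Euclidean metric $d_2$, the second-moment-type quantity satisfies the exact identity $\overline{\mathcal{I}}^2(d_2^2(\cdot,\cdot)) = \frac{1}{3}\left(1 + \frac{1}{m_1^2 n_1} + \frac{1}{m_2^2 n_2}\right)$, where $\overline{\mathcal{I}}^2(d_2^2)$ denotes the double sum $\sum \frac{1}{m_1^2 m_2^2 (n_1+1)^2(n_2+1)^2}\left[\left(\frac{k_1-k}{m_1} + \frac{i_1-i}{m_1 n_1}\right)^2 + \left(\frac{l_1-l}{m_2} + \frac{j_1-j}{m_2 n_2}\right)^2\right]$ over all $1 \le k, k_1 \le m_1$, $1 \le l, l_1 \le m_2$, $0 \le i, i_1 \le n_1$, $0 \le j, j_1 \le n_2$. -/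
/-!
The squared distance splits into its two coordinates, and each coordinate contributes the same
univariate quantity. There, the difference of two nodes is `(k₁ - k) / m + (i₁ - i) / (m n)`:
the cross term vanishes by antisymmetry, and what remains are two sums of squared differences
over an arithmetic progression of length `N`, each equal to `N² (N² - 1) / 6`.
-/

open Finset

theorem sum_sum_sub_sq {R ι : Type*} [CommRing R] (s : Finset ι) (f : ι → R) :
    ∑ a ∈ s, ∑ b ∈ s, (f b - f a) ^ 2 =
      2 * #s * ∑ a ∈ s, f a ^ 2 - 2 * (∑ a ∈ s, f a) ^ 2 := by
  simp only [sub_sq, sum_add_distrib, sum_sub_distrib, sum_const, nsmul_eq_mul, ← mul_sum,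
    ← sum_mul]
  ring

theorem sum_sum_sub_eq_zero {R ι : Type*} [CommRing R] (s : Finset ι) (f : ι → R) :
    ∑ a ∈ s, ∑ b ∈ s, (f b - f a) = 0 := by
  simp only [sum_sub_distrib, sum_const, nsmul_eq_mul, ← mul_sum]
  ring

theorem sum_sum_add_sub_add_sq {R ι κ : Type*} [CommRing R] (s : Finset ι) (t : Finset κ)
    (f : ι → R) (g : κ → R) :
    ∑ a ∈ s, ∑ a' ∈ s, ∑ b ∈ t, ∑ b' ∈ t, ((f a' - f a) + (g b' - g b)) ^ 2 =
      #t ^ 2 * ∑ a ∈ s, ∑ a' ∈ s, (f a' - f a) ^ 2 +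
        #s ^ 2 * ∑ b ∈ t, ∑ b' ∈ t, (g b' - g b) ^ 2 := by
  simp only [add_sq, sum_add_distrib, ← mul_sum, sum_sum_sub_eq_zero, mul_zero, sum_const,
    nsmul_eq_mul]
  ring

theorem two_mul_sum_range_cast {R : Type*} [CommRing R] (N : ℕ) :
    2 * ∑ i ∈ range N, (i : R) = N * (N - 1) := by
  induction N with
  | zero => simp
  | succ N ih => rw [sum_range_succ, mul_add, ih]; push_cast; ring

theorem six_mul_sum_range_cast_sq {R : Type*} [CommRing R] (N : ℕ) :
    6 * ∑ i ∈ range N, (i : R) ^ 2 = N * (N - 1) * (2 * N - 1) := by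
  induction N with
  | zero => simp
  | succ N ih => rw [sum_range_succ, mul_add, ih]; push_cast; ring

theorem six_mul_sum_sum_range_sub_sq {R : Type*} [CommRing R] (N : ℕ) :
    6 * ∑ a ∈ range N, ∑ b ∈ range N, ((b : R) - a) ^ 2 = N ^ 2 * (N ^ 2 - 1) := by
  rw [sum_sum_sub_sq, card_range]
  linear_combination (2 * N : R) * six_mul_sum_range_cast_sq (R := R) N -
    3 * (2 * ∑ i ∈ range N, (i : R) + N * (N - 1)) * two_mul_sum_range_cast (R := R) N

theorem six_mul_sum_sum_Ico_sub_sq {R : Type*} [CommRing R] (a N : ℕ) :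
    6 * ∑ x ∈ Ico a (a + N), ∑ y ∈ Ico a (a + N), ((y : R) - x) ^ 2 =
      N ^ 2 * (N ^ 2 - 1) := by
  simp only [sum_Ico_eq_sum_range, add_tsub_cancel_left, Nat.cast_add, add_sub_add_left_eq_sub]
  exact six_mul_sum_sum_range_sub_sq N

theorem sum_sq_sub_composite_nodes (m n : ℕ) (hm : 0 < m) (hn : 0 < n) :
    ∑ k ∈ Icc 1 m, ∑ k₁ ∈ Icc 1 m, ∑ i ∈ range (n + 1), ∑ i₁ ∈ range (n + 1),
      (((k₁ : ℝ) - k) / m + ((i₁ : ℝ) - i) / (m * n)) ^ 2 =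
      m ^ 2 * (n + 1) ^ 2 / 6 * (1 + 2 / (m ^ 2 * n)) := by
  have hIcc : Icc 1 m = Ico 1 (1 + m) := by rw [add_comm, Ico_add_one_right_eq_Icc]
  have hrange : range (n + 1) = Ico 0 (0 + (n + 1)) := by rw [zero_add, range_eq_Ico]
  have hsplit := sum_sum_add_sub_add_sq (Icc 1 m) (range (n + 1))
    (fun k : ℕ => (k : ℝ) / m) (fun i : ℕ => (i : ℝ) / (m * n))
  have hk := six_mul_sum_sum_Ico_sub_sq (R := ℝ) 1 m
  have hi := six_mul_sum_sum_Ico_sub_sq (R := ℝ) 0 (n + 1)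
  simp only [← sub_div, div_pow, ← sum_div] at hsplit
  rw [hsplit, card_range, Nat.card_Icc, add_tsub_cancel_right, hIcc, hrange]
  push_cast at hi ⊢
  field_simp
  linear_combination (n + 1) ^ 2 * n ^ 2 * hk + m ^ 2 * hi

/-- exact value of the double application of the composite Bernstein cubature
functional to the squared Euclidean distance on `[0,1]²`. -/
theorem stmt14 (n₁ n₂ m₁ m₂ : ℕ) (hn₁ : 0 < n₁) (hn₂ : 0 < n₂)
    (hm₁ : 0 < m₁) (hm₂ : 0 < m₂) :
    (∑ k ∈ Finset.Icc 1 m₁, ∑ k₁ ∈ Finset.Icc 1 m₁,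
      ∑ l ∈ Finset.Icc 1 m₂, ∑ l₁ ∈ Finset.Icc 1 m₂,
      ∑ i ∈ Finset.range (n₁ + 1), ∑ i₁ ∈ Finset.range (n₁ + 1),
      ∑ j ∈ Finset.range (n₂ + 1), ∑ j₁ ∈ Finset.range (n₂ + 1),
        (1 / ((m₁ : ℝ) ^ 2 * m₂ ^ 2 * (n₁ + 1) ^ 2 * (n₂ + 1) ^ 2)) *
          ((((k₁ : ℝ) - k) / m₁ + ((i₁ : ℝ) - i) / (m₁ * n₁)) ^ 2 +
            (((l₁ : ℝ) - l) / m₂ + ((j₁ : ℝ) - j) / (m₂ * n₂)) ^ 2)) =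
      (1 / 3) * (1 + 1 / ((m₁ : ℝ) ^ 2 * n₁) + 1 / ((m₂ : ℝ) ^ 2 * n₂)) := by
  simp only [mul_add, sum_add_distrib, sum_const, Nat.card_Icc, card_range, nsmul_eq_mul,
    add_tsub_cancel_right, ← mul_sum]
  rw [sum_sq_sub_composite_nodes m₁ n₁ hm₁ hn₁,
    sum_sq_sub_composite_nodes m₂ n₂ hm₂ hn₂]
  push_cast
  field_simp
  ring
end

section
/- Let $Y$ be a set, and let $(a_n)_{n\ge0}, (b_m)_{m\ge0}$ be nonnegative summable sequences with $\sum_n a_n = \sum_m b_m = 1$. Let $x_n, y_m \in Y$ be mutually distinct points and define $L : B(Y^2) \to \mathbb{R}$ by $Lf = \sum_{n,m} a_n b_m f(x_n, y_m)$. Then for all bounded $f, g$: $|L(fg) - L(f)L(g)| \le \frac{1}{2}\left(1 - \sum_n a_n^2 \cdot \sum_m b_m^2\right) \mathrm{osc}_L(f)\,\mathrm{osc}_L(g)$, where $\mathrm{osc}_L(f) = \sup\{|f(x_n,y_m) - f(x_i,y_j)| : n,m,i,j \ge 0\}$. -/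
/-!
Write `w (n, m) = aₙ bₘ`, a probability weight on `ℕ × ℕ`. Korkine's identity
`2 (L(FG) - L(F) L(G)) = ∑_{p,q} w_p w_q (F p - F q)(G p - G q)` expresses the covariance through
pairs of points; the diagonal pairs contribute nothing, and each off-diagonal pair at most
`w_p w_q osc(F) osc(G)`. The off-diagonal mass is `1 - ∑ w_p² = 1 - (∑ aₙ²)(∑ bₘ²)`.
-/

open Set Function

section WeightedSums

variable {ι κ : Type*} {w : ι → ℝ}

lemma exists_abs_le_of_abs_sub_le {F : ι → ℝ} {D : ℝ} (hF : ∀ p q, |F p - F q| ≤ D) :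
    ∃ C, ∀ p, |F p| ≤ C := by
  rcases isEmpty_or_nonempty ι with hι | ⟨⟨p₀⟩⟩
  · exact ⟨0, isEmptyElim⟩
  · refine ⟨|F p₀| + D, fun p => ?_⟩
    calc |F p| = |F p₀ + (F p - F p₀)| := by ring_nf
      _ ≤ |F p₀| + D := (abs_add_le _ _).trans (add_le_add_right (hF p p₀) _)

lemma abs_mul_le_mul_of_abs_le {s t C D : ℝ} (hs : |s| ≤ C) (ht : |t| ≤ D) :
    |s * t| ≤ C * D := by
  rw [abs_mul]
  exact mul_le_mul hs ht (abs_nonneg t) ((abs_nonneg s).trans hs)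

lemma Summable.mul_of_abs_le (hw : Summable w) (hw0 : 0 ≤ w) {F : ι → ℝ} {C : ℝ}
    (hF : ∀ p, |F p| ≤ C) : Summable fun p => w p * F p :=
  (hw.mul_right C).of_norm_bounded fun p => by
    rw [Real.norm_eq_abs, abs_mul, abs_of_nonneg (hw0 p)]
    exact mul_le_mul_of_nonneg_left (hF p) (hw0 p)

lemma HasSum.mul_of_nonneg {b : κ → ℝ} {s t : ℝ} (hw : HasSum w s) (hb : HasSum b t)
    (hw0 : 0 ≤ w) (hb0 : 0 ≤ b) : HasSum (fun r : ι × κ => w r.1 * b r.2) (s * t) :=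
  hw.mul hb (hw.summable.mul_of_nonneg hb.summable hw0 hb0)

lemma tsum_prod_mul_eq_tsum_tsum {b : κ → ℝ} (hw : Summable w) (hb : Summable b)
    (hw0 : 0 ≤ w) (hb0 : 0 ≤ b) {H : ι → κ → ℝ} {C : ℝ}
    (hH : ∀ p q, |H p q| ≤ C) :
    ∑' r : ι × κ, w r.1 * b r.2 * H r.1 r.2 = ∑' p, ∑' q, w p * b q * H p q := by
  have h := (hw.mul_of_nonneg hb hw0 hb0).mul_of_abs_le (fun r => mul_nonneg (hw0 _) (hb0 _))
    fun r => hH r.1 r.2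
  exact h.tsum_prod' h.prod_factor

lemma Summable.sq_of_nonneg (hw : Summable w) (hw0 : 0 ≤ w) : Summable fun p => w p ^ 2 := by
  simpa [sq, comp_def, Function.diag] using
    (hw.mul_of_nonneg hw hw0 hw0).comp_injective diag_injective

lemma hasSum_prod_mul_of_abs_le (hw : Summable w) (hw0 : 0 ≤ w) {F G : ι → ℝ} {CF CG : ℝ}
    (hF : ∀ p, |F p| ≤ CF) (hG : ∀ p, |G p| ≤ CG) :
    HasSum (fun r : ι × ι => w r.1 * F r.1 * (w r.2 * G r.2))
      ((∑' p, w p * F p) * ∑' p, w p * G p) := by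
  have hFG : ∀ r : ι × ι, |F r.1 * G r.2| ≤ CF * CG := fun r =>
    abs_mul_le_mul_of_abs_le (hF r.1) (hG r.2)
  have hW :=
    (hw.mul_of_nonneg hw hw0 hw0).mul_of_abs_le (fun r => mul_nonneg (hw0 r.1) (hw0 r.2)) hFG
  refine (hw.mul_of_abs_le hw0 hF).hasSum.mul (hw.mul_of_abs_le hw0 hG).hasSum ?_
  exact hW.congr fun r => by ring

lemma hasSum_korkine (hw : HasSum w 1) (hw0 : 0 ≤ w) {F G : ι → ℝ} {CF CG : ℝ}
    (hF : ∀ p, |F p| ≤ CF) (hG : ∀ p, |G p| ≤ CG) :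
    HasSum (fun r : ι × ι => w r.1 * w r.2 * ((F r.1 - F r.2) * (G r.1 - G r.2)))
      (2 * (∑' p, w p * (F p * G p) - (∑' p, w p * F p) * ∑' p, w p * G p)) := by
  have hFG : ∀ p, |F p * G p| ≤ CF * CG := fun p => abs_mul_le_mul_of_abs_le (hF p) (hG p)
  have h1 : ∀ _ : ι, |(1 : ℝ)| ≤ 1 := fun _ => by simp
  have hw' := hw.summable
  have hsum := ((hasSum_prod_mul_of_abs_le hw' hw0 hFG h1).add
    (hasSum_prod_mul_of_abs_le hw' hw0 h1 hFG)).sub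
    ((hasSum_prod_mul_of_abs_le hw' hw0 hF hG).add (hasSum_prod_mul_of_abs_le hw' hw0 hG hF))
  simp only [mul_one, hw.tsum_eq] at hsum
  rw [show ∀ S A B : ℝ, 2 * (S - A * B) = S + 1 * S - (A * B + B * A) by intros; ring]
  refine hsum.congr_fun fun r => ?_
  ring

lemma hasSum_indicator_diagonal_compl (hw : HasSum w 1) (hw0 : 0 ≤ w) :
    HasSum ((diagonal ι)ᶜ.indicator fun r => w r.1 * w r.2) (1 - ∑' p, w p ^ 2) := by
  have hW : HasSum (fun r : ι × ι => w r.1 * w r.2) 1 := by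
    simpa using hw.mul_of_nonneg hw hw0 hw0
  have hdiag : HasSum ((diagonal ι).indicator fun r => w r.1 * w r.2) (∑' p, w p ^ 2) := by
    refine (diag_injective.hasSum_iff fun r hr => indicator_of_notMem ?_ _).mp ?_
    · rwa [← range_diag]
    · convert (hw.summable.sq_of_nonneg hw0).hasSum using 1
      funext p
      simp [Function.diag, sq]
  rw [indicator_compl]
  exact hW.sub hdiag

theorem abs_tsum_mul_sub_tsum_mul_tsum_le (hw : HasSum w 1) (hw0 : 0 ≤ w) {F G : ι → ℝ}
    {DF DG : ℝ} (hF : ∀ p q, |F p - F q| ≤ DF) (hG : ∀ p q, |G p - G q| ≤ DG) :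
    |∑' p, w p * (F p * G p) - (∑' p, w p * F p) * ∑' p, w p * G p| ≤
      1 / 2 * (1 - ∑' p, w p ^ 2) * DF * DG := by
  obtain ⟨CF, hCF⟩ := exists_abs_le_of_abs_sub_le hF
  obtain ⟨CG, hCG⟩ := exists_abs_le_of_abs_sub_le hG
  have hT := hasSum_korkine hw hw0 hCF hCG
  have hB := (hasSum_indicator_diagonal_compl hw hw0).mul_right (DF * DG)
  have hTB : ∀ r : ι × ι, |w r.1 * w r.2 * ((F r.1 - F r.2) * (G r.1 - G r.2))| ≤
      (diagonal ι)ᶜ.indicator (fun r => w r.1 * w r.2) r * (DF * DG) := by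
    rintro ⟨p, q⟩
    by_cases hpq : p = q
    · simp [hpq]
    · have hwpq : 0 ≤ w p * w q := mul_nonneg (hw0 p) (hw0 q)
      rw [indicator_of_mem (by simpa using hpq), abs_mul, abs_of_nonneg hwpq]
      exact mul_le_mul_of_nonneg_left (abs_mul_le_mul_of_abs_le (hF p q) (hG p q)) hwpq
  have h2 := abs_le.2 ⟨hasSum_le (fun r => neg_le_of_abs_le (hTB r)) hB.neg hT,
    hasSum_le (fun r => le_of_abs_le (hTB r)) hT hB⟩
  rw [abs_mul, abs_two] at h2
  linarith

end WeightedSums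

lemma abs_sub_le_sSup_of_abs_le {Y : Type*} (x y : ℕ → Y) {h : Y → Y → ℝ} {C : ℝ}
    (hC : ∀ p q, |h p q| ≤ C) (n m i j : ℕ) :
    |h (x n) (y m) - h (x i) (y j)| ≤
      sSup {v | ∃ n m i j : ℕ, v = |h (x n) (y m) - h (x i) (y j)|} := by
  refine le_csSup ⟨C + C, ?_⟩ ⟨n, m, i, j, rfl⟩
  rintro v ⟨n, m, i, j, rfl⟩
  exact (abs_sub _ _).trans (add_le_add (hC _ _) (hC _ _))

theorem stmt15_general {Y : Type*} (a b : ℕ → ℝ)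
    (ha0 : ∀ n, 0 ≤ a n) (hb0 : ∀ m, 0 ≤ b m)
    (haS : Summable a) (hbS : Summable b)
    (ha1 : ∑' n, a n = 1) (hb1 : ∑' m, b m = 1)
    (x y : ℕ → Y)
    (f g : Y → Y → ℝ)
    (hf : ∃ C : ℝ, ∀ p q : Y, |f p q| ≤ C) (hg : ∃ C : ℝ, ∀ p q : Y, |g p q| ≤ C) :
    |(∑' n, ∑' m, a n * b m * f (x n) (y m) * g (x n) (y m)) -
        (∑' n, ∑' m, a n * b m * f (x n) (y m)) *
          (∑' n, ∑' m, a n * b m * g (x n) (y m))| ≤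
      (1 / 2) * (1 - (∑' n, (a n) ^ 2) * (∑' m, (b m) ^ 2)) *
        (sSup {v | ∃ n m i j : ℕ, v = |f (x n) (y m) - f (x i) (y j)|}) *
        (sSup {v | ∃ n m i j : ℕ, v = |g (x n) (y m) - g (x i) (y j)|}) := by
  obtain ⟨Cf, hCf⟩ := hf
  obtain ⟨Cg, hCg⟩ := hg
  have hw : HasSum (fun p : ℕ × ℕ => a p.1 * b p.2) 1 := by
    simpa [ha1, hb1] using haS.hasSum.mul_of_nonneg hbS.hasSum ha0 hb0
  have hsq : ∑' p : ℕ × ℕ, (a p.1 * b p.2) ^ 2 = (∑' n, a n ^ 2) * ∑' m, b m ^ 2 := by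
    simp_rw [mul_pow]
    exact ((haS.sq_of_nonneg ha0).hasSum.mul_of_nonneg (hbS.sq_of_nonneg hb0).hasSum
      (fun n => sq_nonneg _) fun m => sq_nonneg _).tsum_eq
  have key := abs_tsum_mul_sub_tsum_mul_tsum_le hw (fun p => mul_nonneg (ha0 p.1) (hb0 p.2))
    (fun p q => abs_sub_le_sSup_of_abs_le x y hCf p.1 p.2 q.1 q.2)
    (fun p q => abs_sub_le_sSup_of_abs_le x y hCg p.1 p.2 q.1 q.2)
  rw [hsq, tsum_prod_mul_eq_tsum_tsum haS hbS ha0 hb0 fun n m => hCf (x n) (y m),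
    tsum_prod_mul_eq_tsum_tsum haS hbS ha0 hb0 fun n m => hCg (x n) (y m),
    tsum_prod_mul_eq_tsum_tsum haS hbS ha0 hb0 fun n m =>
      abs_mul_le_mul_of_abs_le (hCf (x n) (y m)) (hCg (x n) (y m))] at key
  simpa only [mul_assoc] using key

/-- discrete Chebyshev–Grüss inequality with oscillations for the positive
linear functional `L f = ∑ₙ ∑ₘ aₙ bₘ f (xₙ, yₘ)` built from nonnegative weights summing
to one. -/
theorem stmt15 {Y : Type*} (a b : ℕ → ℝ)
    (ha0 : ∀ n, 0 ≤ a n) (hb0 : ∀ m, 0 ≤ b m)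
    (haS : Summable a) (hbS : Summable b)
    (ha1 : ∑' n, a n = 1) (hb1 : ∑' m, b m = 1)
    (x y : ℕ → Y) (hx : Function.Injective x) (hy : Function.Injective y)
    (f g : Y → Y → ℝ)
    (hf : ∃ C : ℝ, ∀ p q : Y, |f p q| ≤ C) (hg : ∃ C : ℝ, ∀ p q : Y, |g p q| ≤ C) :
    |(∑' n, ∑' m, a n * b m * f (x n) (y m) * g (x n) (y m)) -
        (∑' n, ∑' m, a n * b m * f (x n) (y m)) *
          (∑' n, ∑' m, a n * b m * g (x n) (y m))| ≤
      (1 / 2) * (1 - (∑' n, (a n) ^ 2) * (∑' m, (b m) ^ 2)) *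
        (sSup {v | ∃ n m i j : ℕ, v = |f (x n) (y m) - f (x i) (y j)|}) *
        (sSup {v | ∃ n m i j : ℕ, v = |g (x n) (y m) - g (x i) (y j)|}) :=
  stmt15_general a b ha0 hb0 haS hbS ha1 hb1 x y f g hf hg
end

section
/- For the composite Bernstein cubature functional $\overline{\mathcal{I}}$ and bounded functions $f, g$ on $[0,1]^2$: $|\overline{\mathcal{I}}(fg) - \overline{\mathcal{I}}(f)\overline{\mathcal{I}}(g)| \le \frac{1}{2}\left(1 - \frac{1}{m_1 m_2 (n_1+1)(n_2+1)}\right)\mathrm{osc}(f)\,\mathrm{osc}(g)$, where $\mathrm{osc}(f)$ is the supremum of $|f(P) - f(Q)|$ over all pairs of cubature nodes $P, Q$. -/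
/-!
`Ibar` is the uniform average over the `N = m₁ m₂ (n₁ + 1) (n₂ + 1)` index tuples of the nodes.
For any uniform average, Korkine's identity
`2 (N ∑ F G - ∑ F ∑ G) = ∑_{a,b} (F a - F b) (G a - G b)`
reduces the claim to bounding the double sum: its `N` diagonal terms vanish and each of the
other `N (N - 1)` terms is at most `osc f * osc g` in absolute value.
-/

open Finset

/-- Oscillation of `f` over the cubature nodes of `Ibar`. -/
noncomputable def oscNodes (n₁ n₂ m₁ m₂ : ℕ) (f : ℝ → ℝ → ℝ) : ℝ :=
  sSup {v | ∃ k ∈ Finset.Icc 1 m₁, ∃ l ∈ Finset.Icc 1 m₂,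
    ∃ i ∈ Finset.range (n₁ + 1), ∃ j ∈ Finset.range (n₂ + 1),
    ∃ k' ∈ Finset.Icc 1 m₁, ∃ l' ∈ Finset.Icc 1 m₂,
    ∃ i' ∈ Finset.range (n₁ + 1), ∃ j' ∈ Finset.range (n₂ + 1),
    v = |f (((k : ℝ) - 1) / m₁ + (i : ℝ) / (m₁ * n₁))
            (((l : ℝ) - 1) / m₂ + (j : ℝ) / (m₂ * n₂)) -
          f (((k' : ℝ) - 1) / m₁ + (i' : ℝ) / (m₁ * n₁))
            (((l' : ℝ) - 1) / m₂ + (j' : ℝ) / (m₂ * n₂))|}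

open scoped BigOperators

namespace Finset

variable {ι : Type*} (s : Finset ι) (F G : ι → ℝ)

theorem sum_sum_sub_mul_sub :
    ∑ a ∈ s, ∑ b ∈ s, (F a - F b) * (G a - G b) =
      2 * (#s * ∑ a ∈ s, F a * G a - (∑ a ∈ s, F a) * ∑ a ∈ s, G a) := by
  simp_rw [show ∀ a b, (F a - F b) * (G a - G b) = F a * G a + F b * G b - F a * G b - F b * G a
    from fun a b => by ring]
  simp only [sum_add_distrib, sum_sub_distrib, sum_const, nsmul_eq_mul, ← mul_sum, ← sum_mul]
  ring

variable {s F G} {A B : ℝ}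

theorem abs_card_mul_sum_mul_sub_sum_mul_sum_le
    (hF : ∀ a ∈ s, ∀ b ∈ s, |F a - F b| ≤ A) (hG : ∀ a ∈ s, ∀ b ∈ s, |G a - G b| ≤ B) :
    |#s * ∑ a ∈ s, F a * G a - (∑ a ∈ s, F a) * ∑ a ∈ s, G a| ≤
      #s * (#s - 1) / 2 * (A * B) := by
  classical
  have hterm : ∀ a ∈ s, ∀ b ∈ s, |(F a - F b) * (G a - G b)| ≤ A * B := fun a ha b hb => by
    rw [abs_mul]
    exact mul_le_mul (hF a ha b hb) (hG a ha b hb) (abs_nonneg _)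
      ((abs_nonneg _).trans (hF a ha b hb))
  have hrow : ∀ a ∈ s, |∑ b ∈ s, (F a - F b) * (G a - G b)| ≤ (#s - 1) * (A * B) := by
    intro a ha
    rw [← sum_erase s (f := fun b => (F a - F b) * (G a - G b)) (a := a) (by simp)]
    calc |∑ b ∈ s.erase a, (F a - F b) * (G a - G b)|
        ≤ ∑ b ∈ s.erase a, |(F a - F b) * (G a - G b)| := abs_sum_le_sum_abs _ _
      _ ≤ ∑ b ∈ s.erase a, A * B :=
          sum_le_sum fun b hb => hterm a ha b (mem_of_mem_erase hb)
      _ = (#s - 1) * (A * B) := by rw [sum_const, nsmul_eq_mul, cast_card_erase_of_mem ha]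
  have htotal : |∑ a ∈ s, ∑ b ∈ s, (F a - F b) * (G a - G b)| ≤ #s * ((#s - 1) * (A * B)) :=
    calc _ ≤ ∑ a ∈ s, |∑ b ∈ s, (F a - F b) * (G a - G b)| := abs_sum_le_sum_abs _ _
      _ ≤ ∑ a ∈ s, (#s - 1) * (A * B) := sum_le_sum hrow
      _ = _ := by rw [sum_const, nsmul_eq_mul]
  rw [sum_sum_sub_mul_sub, abs_mul, abs_two] at htotal
  linarith

theorem abs_expect_mul_sub_expect_mul_expect_le (hs : s.Nonempty)
    (hF : ∀ a ∈ s, ∀ b ∈ s, |F a - F b| ≤ A) (hG : ∀ a ∈ s, ∀ b ∈ s, |G a - G b| ≤ B) :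
    |(𝔼 a ∈ s, F a * G a) - (𝔼 a ∈ s, F a) * (𝔼 a ∈ s, G a)| ≤ 1 / 2 * (1 - 1 / #s) * A * B := by
  have hcard : (0 : ℝ) < #s := by exact_mod_cast hs.card_pos
  have key := abs_card_mul_sum_mul_sub_sum_mul_sum_le hF hG
  have hdiff : (𝔼 a ∈ s, F a * G a) - (𝔼 a ∈ s, F a) * (𝔼 a ∈ s, G a) =
      (#s * ∑ a ∈ s, F a * G a - (∑ a ∈ s, F a) * ∑ a ∈ s, G a) / #s ^ 2 := by
    simp only [expect_eq_sum_div_card]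
    field_simp
  rw [hdiff, abs_div, abs_of_pos (pow_pos hcard 2), div_le_iff₀ (pow_pos hcard 2)]
  refine key.trans_eq ?_
  field_simp

end Finset

section Cubature

variable (n₁ n₂ m₁ m₂ : ℕ)

def cubatureIndex : Finset (ℕ × ℕ × ℕ × ℕ) :=
  Icc 1 m₁ ×ˢ Icc 1 m₂ ×ˢ range (n₁ + 1) ×ˢ range (n₂ + 1)

noncomputable def cubatureNode (p : ℕ × ℕ × ℕ × ℕ) : ℝ × ℝ :=
  (((p.1 : ℝ) - 1) / m₁ + (p.2.2.1 : ℝ) / (m₁ * n₁),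
    ((p.2.1 : ℝ) - 1) / m₂ + (p.2.2.2 : ℝ) / (m₂ * n₂))

theorem card_cubatureIndex :
    (#(cubatureIndex n₁ n₂ m₁ m₂) : ℝ) = m₁ * m₂ * (n₁ + 1) * (n₂ + 1) := by
  simp only [cubatureIndex, card_product, Nat.card_Icc, card_range, add_tsub_cancel_right]
  push_cast
  ring

theorem Ibar_eq_expect (f : ℝ → ℝ → ℝ) :
    Ibar n₁ n₂ m₁ m₂ f =
      𝔼 p ∈ cubatureIndex n₁ n₂ m₁ m₂, f (cubatureNode n₁ n₂ m₁ m₂ p).1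
        (cubatureNode n₁ n₂ m₁ m₂ p).2 := by
  rw [expect_eq_sum_div_card, card_cubatureIndex, div_eq_inv_mul, ← one_div, Ibar]
  simp only [cubatureIndex, sum_product, cubatureNode]

theorem abs_sub_le_oscNodes (f : ℝ → ℝ → ℝ) :
    ∀ p ∈ cubatureIndex n₁ n₂ m₁ m₂, ∀ q ∈ cubatureIndex n₁ n₂ m₁ m₂,
      |f (cubatureNode n₁ n₂ m₁ m₂ p).1 (cubatureNode n₁ n₂ m₁ m₂ p).2 -
        f (cubatureNode n₁ n₂ m₁ m₂ q).1 (cubatureNode n₁ n₂ m₁ m₂ q).2| ≤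
      oscNodes n₁ n₂ m₁ m₂ f := by
  rintro ⟨k, l, i, j⟩ hp ⟨k', l', i', j'⟩ hq
  simp only [cubatureIndex, mem_product] at hp hq
  unfold oscNodes
  refine le_csSup ?_ ⟨k, hp.1, l, hp.2.1, i, hp.2.2.1, j, hp.2.2.2,
    k', hq.1, l', hq.2.1, i', hq.2.2.1, j', hq.2.2.2, rfl⟩
  let F p := f (cubatureNode n₁ n₂ m₁ m₂ p).1 (cubatureNode n₁ n₂ m₁ m₂ p).2
  refine (((cubatureIndex n₁ n₂ m₁ m₂ ×ˢ cubatureIndex n₁ n₂ m₁ m₂).image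
    fun pq => |F pq.1 - F pq.2|).bddAbove).mono ?_
  rintro v ⟨k, hk, l, hl, i, hi, j, hj, k', hk', l', hl', i', hi', j', hj', rfl⟩
  simp only [coe_image, Set.mem_image, mem_coe, mem_product, cubatureIndex]
  exact ⟨((k, l, i, j), (k', l', i', j')), ⟨⟨hk, hl, hi, hj⟩, hk', hl', hi', hj'⟩, rfl⟩

end Cubature

theorem stmt16_general (n₁ n₂ m₁ m₂ : ℕ)
    (hm₁ : 0 < m₁) (hm₂ : 0 < m₂) (f g : ℝ → ℝ → ℝ) :
    |Ibar n₁ n₂ m₁ m₂ (fun s t => f s t * g s t) -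
        Ibar n₁ n₂ m₁ m₂ f * Ibar n₁ n₂ m₁ m₂ g| ≤
      (1 / 2) * (1 - 1 / ((m₁ : ℝ) * m₂ * (n₁ + 1) * (n₂ + 1))) *
        oscNodes n₁ n₂ m₁ m₂ f * oscNodes n₁ n₂ m₁ m₂ g := by
  have hne : (cubatureIndex n₁ n₂ m₁ m₂).Nonempty :=
    ⟨(1, 1, 0, 0), by simp [cubatureIndex, Nat.one_le_iff_ne_zero, hm₁.ne', hm₂.ne']⟩
  simpa only [Ibar_eq_expect, card_cubatureIndex] using
    abs_expect_mul_sub_expect_mul_expect_le hne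
      (abs_sub_le_oscNodes n₁ n₂ m₁ m₂ f) (abs_sub_le_oscNodes n₁ n₂ m₁ m₂ g)

/-- Chebyshev–Grüss inequality with discrete oscillations for the composite
Bernstein cubature functional. -/
theorem stmt16 (n₁ n₂ m₁ m₂ : ℕ) (hn₁ : 0 < n₁) (hn₂ : 0 < n₂)
    (hm₁ : 0 < m₁) (hm₂ : 0 < m₂) (f g : ℝ → ℝ → ℝ)
    (hf : ∃ C : ℝ, ∀ p q : ℝ, |f p q| ≤ C) (hg : ∃ C : ℝ, ∀ p q : ℝ, |g p q| ≤ C) :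
    |Ibar n₁ n₂ m₁ m₂ (fun s t => f s t * g s t) -
        Ibar n₁ n₂ m₁ m₂ f * Ibar n₁ n₂ m₁ m₂ g| ≤
      (1 / 2) * (1 - 1 / ((m₁ : ℝ) * m₂ * (n₁ + 1) * (n₂ + 1))) *
        oscNodes n₁ n₂ m₁ m₂ f * oscNodes n₁ n₂ m₁ m₂ g :=
  stmt16_general n₁ n₂ m₁ m₂ hm₁ hm₂ f g
end
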